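/- arXiv:math/9711220 — 4 statements merged into one kernel-verified Lean document; each statement's English description precedes it below -/
import Mathlib

section
/- Let λ, μ be infinite cardinals and let I be a linear order that is (μ,λ)-positively* entangled and has a μ-separative point. Then for every infinite cardinal θ < λ, 2^θ < μ. -/
universe u v w

open Cardinal Set Order

/-- A linear order `α` is `(μ,σ)`-entangled. -/
def IsEntangled (α : Type w) [LinearOrder α] (μ σ : Cardinal.{v}) : Prop :=
  ∀ σ₁ : Cardinal.{v}, σ₁ < σ →
    ∀ t : Ordinal.{v} → Ordinal.{v} → α,
      (∀ ε, ε < σ₁.ord → ∀ ε', ε' < σ₁.ord → ∀ i, i < μ.ord → ∀ i', i' < μ.ord →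
          (ε ≠ ε' ∨ i ≠ i') → t ε i ≠ t ε' i') →
      ∀ u : Set Ordinal.{v},
        ∃ a, a < μ.ord ∧ ∃ b, b < μ.ord ∧ a < b ∧
          ∀ ε, ε < σ₁.ord → (t ε a < t ε b ↔ ε ∈ u)

/-- A linear order `α` is `(μ,σ)`-strongly entangled. -/
def IsStronglyEntangled (α : Type w) [LinearOrder α] (μ σ : Cardinal.{v}) : Prop :=
  ∀ σ₁ : Cardinal.{v}, σ₁ < σ →
    ∀ t : Ordinal.{v} → Ordinal.{v} → α,
      ∀ u : Set Ordinal.{v},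
        (∀ i, i < μ.ord → ∀ ε₀, ε₀ < σ₁.ord → ε₀ ∈ u → ∀ ε₁, ε₁ < σ₁.ord → ε₁ ∉ u →
          t ε₀ i ≠ t ε₁ i) →
        ∃ a, a < μ.ord ∧ ∃ b, b < μ.ord ∧ a < b ∧
          ∀ ε, ε < σ₁.ord → (t ε a ≤ t ε b ↔ ε ∈ u)

/-- A linear order `α` is `(μ,σ)`-positively entangled. -/
def IsPosEntangled (α : Type w) [LinearOrder α] (μ σ : Cardinal.{v}) : Prop :=
  ∀ σ₁ : Cardinal.{v}, σ₁ < σ →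
    ∀ t : Ordinal.{v} → Ordinal.{v} → α,
      (∀ ε, ε < σ₁.ord → ∀ i, i < μ.ord → ∀ j, j < μ.ord → i ≠ j → t ε i ≠ t ε j) →
      ∀ u : Set Ordinal.{v}, (u = ∅ ∨ u = Set.Iio σ₁.ord) →
        ∃ a, a < μ.ord ∧ ∃ b, b < μ.ord ∧ a < b ∧
          ∀ ε, ε < σ₁.ord → (t ε a < t ε b ↔ ε ∈ u)

/-- A linear order `α` is `(μ,σ)`-positively* entangled. -/
def IsPosStarEntangled (α : Type w) [LinearOrder α] (μ σ : Cardinal.{v}) : Prop :=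
  ∀ σ₁ : Cardinal.{v}, σ₁ < σ →
    ∀ t : Ordinal.{v} → Ordinal.{v} → α,
      (∀ ε, ε < σ₁.ord → ∀ i, i < μ.ord → ∀ j, j < μ.ord → i ≠ j → t ε i ≠ t ε j) →
      ∀ u : Set Ordinal.{v}, (u = ∅ ∨ u = Set.Iio σ₁.ord) →
        ∃ a, a < μ.ord ∧ ∃ b, b < μ.ord ∧ a ≠ b ∧
          ∀ ε, ε < σ₁.ord → (t ε a < t ε b ↔ ε ∈ u)

/-- The density of a linear order: the least cardinality of a set meeting
every nonempty open interval. -/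
noncomputable def densityCard (α : Type u) [LinearOrder α] : Cardinal.{u} :=
  sInf { c | ∃ A : Set α, #A = c ∧
    ∀ x y : α, (Set.Ioo x y).Nonempty → (A ∩ Set.Ioo x y).Nonempty }

/-- `c.c.(α)`: the least cardinal `κ` such that there is no family of `κ`
pairwise disjoint nonempty open intervals in `α`. -/
noncomputable def ccCard (α : Type u) [LinearOrder α] : Cardinal.{u} :=
  sInf { κ | ¬ ∃ S : Set (Set α), #S = κ ∧
    (∀ J ∈ S, J.Nonempty ∧ ∃ a b : α, J = Set.Ioo a b) ∧ S.PairwiseDisjoint id }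

/-- `h.c.c.(α) = min { c.c.(J) : J ⊆ α, |J| = |α| }`. -/
noncomputable def hccCard (α : Type u) [LinearOrder α] : Cardinal.{u} :=
  sInf { c | ∃ J : Set α, #J = #α ∧ ccCard J = c }

/-- `x` is a `μ`-separative point. -/
def Separative (α : Type u) [LinearOrder α] (μ : Cardinal.{u}) (x : α) : Prop :=
  μ ≤ #{y : α | y < x} ∧ μ ≤ #{y : α | x < y}

/-- A linear order is hereditarily separative. -/
def HereditarilySeparative (α : Type u) [LinearOrder α] : Prop :=
  ∀ A : Set α, #A = #α → ∃ x : A, Separative A (#α) x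
/-- Lemma 3.2: if a `(μ,λ)`-positively* entangled order has a `μ`-separative
point then `2^θ < μ` for all infinite `θ < λ`. -/
theorem posStar_two_pow_lt (α : Type u) [LinearOrder α] (lam μ : Cardinal.{u})
    (hlam : ℵ₀ ≤ lam) (hμ : ℵ₀ ≤ μ)
    (h : IsPosStarEntangled α μ lam)
    (x : α) (hx : Separative α μ x) :
    ∀ θ : Cardinal.{u}, ℵ₀ ≤ θ → θ < lam → (2 : Cardinal.{u}) ^ θ < μ := by
  intro θ hθ hθlam
  by_contra hcon
  push_neg at hcon
  classical
  set M := μ.ord.ToType with hM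
  set T := θ.ord.ToType with hT
  have hMT : #M = μ := Cardinal.mk_ord_toType μ
  have hTT : #T = θ := Cardinal.mk_ord_toType θ
  -- an injection from M into T → Bool
  have h1 : #M ≤ #(T → Bool) := by
    rw [hMT, Cardinal.mk_arrow, Cardinal.mk_bool]
    simpa [hTT] using hcon
  obtain ⟨f0⟩ := Cardinal.le_def _ _ |>.mp h1
  -- complement-closed coding
  let f : M → (T × Bool → Bool) := fun i p => xor (f0 i p.1) p.2
  have key : ∀ i j : M, i ≠ j → ∃ p, f i p = true ∧ f j p = false := by
    intro i j hij
    have hne : f0 i ≠ f0 j := fun hh => hij (f0.injective hh)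
    have : ∃ e, f0 i e ≠ f0 j e := by
      by_contra hc
      push_neg at hc
      exact hne (funext hc)
    obtain ⟨e, he⟩ := this
    refine ⟨(e, !(f0 i e)), ?_, ?_⟩
    · simp [f]
    · have : f0 j e = !(f0 i e) := by
        cases hb : f0 i e <;> cases hb' : f0 j e <;> simp_all
      simp [f, this]
  -- embeddings into the sets below and above x
  obtain ⟨A⟩ := Cardinal.le_def _ _ |>.mp (hMT ▸ hx.1)
  obtain ⟨B⟩ := Cardinal.le_def _ _ |>.mp (hMT ▸ hx.2)
  have hA : ∀ m : M, (A m : α) < x := fun m => (A m).2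
  have hB : ∀ m : M, x < (B m : α) := fun m => (B m).2
  -- equivalence T ≃ T × Bool
  have hTB : #(T × Bool) = #T := by
    rw [Cardinal.mk_prod, Cardinal.mk_bool]
    simp only [Cardinal.lift_id', Cardinal.lift_two, hTT]
    exact Cardinal.mul_eq_left hθ ((Cardinal.nat_lt_aleph0 2).le.trans hθ) two_ne_zero
  obtain ⟨g⟩ := Cardinal.eq.mp hTB.symm
  -- the family t
  let t : Ordinal.{u} → Ordinal.{u} → α := fun ε i =>
    if hεi : ε < θ.ord ∧ i < μ.ord then
      (if f ((Ordinal.ToType.mk (o := μ.ord)) ⟨i, hεi.2⟩)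
            (g ((Ordinal.ToType.mk (o := θ.ord)) ⟨ε, hεi.1⟩)) then
        (B ((Ordinal.ToType.mk (o := μ.ord)) ⟨i, hεi.2⟩) : α)
      else (A ((Ordinal.ToType.mk (o := μ.ord)) ⟨i, hεi.2⟩) : α))
    else x
  have teval : ∀ ε (hε : ε < θ.ord) i (hi : i < μ.ord),
      t ε i = (if f ((Ordinal.ToType.mk (o := μ.ord)) ⟨i, hi⟩)
            (g ((Ordinal.ToType.mk (o := θ.ord)) ⟨ε, hε⟩)) then
        (B ((Ordinal.ToType.mk (o := μ.ord)) ⟨i, hi⟩) : α)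
      else (A ((Ordinal.ToType.mk (o := μ.ord)) ⟨i, hi⟩) : α)) := by
    intro ε hε i hi
    exact dif_pos ⟨hε, hi⟩
  have hidx : ∀ i (hi : i < μ.ord) j (hj : j < μ.ord), i ≠ j →
      (Ordinal.ToType.mk (o := μ.ord)) ⟨i, hi⟩ ≠ (Ordinal.ToType.mk (o := μ.ord)) ⟨j, hj⟩ := by
    intro i hi j hj hij hh
    exact hij (congrArg Subtype.val (((Ordinal.ToType.mk (o := μ.ord))).injective hh))
  -- injectivity of each column
  have hinj : ∀ ε, ε < θ.ord → ∀ i, i < μ.ord → ∀ j, j < μ.ord → i ≠ j →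
      t ε i ≠ t ε j := by
    intro ε hε i hi j hj hij
    rw [teval ε hε i hi, teval ε hε j hj]
    set mi := (Ordinal.ToType.mk (o := μ.ord)) ⟨i, hi⟩
    set mj := (Ordinal.ToType.mk (o := μ.ord)) ⟨j, hj⟩
    have hm : mi ≠ mj := hidx i hi j hj hij
    by_cases h1 : f mi (g ((Ordinal.ToType.mk (o := θ.ord)) ⟨ε, hε⟩)) <;>
      by_cases h2 : f mj (g ((Ordinal.ToType.mk (o := θ.ord)) ⟨ε, hε⟩)) <;>
      simp only [h1, h2, if_true, if_false]
    · intro hh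
      exact hm (B.injective (Subtype.val_injective hh))
    · exact ne_of_gt ((hA mj).trans (hB mi))
    · exact ne_of_lt ((hA mi).trans (hB mj))
    · intro hh
      exact hm (A.injective (Subtype.val_injective hh))
  obtain ⟨a, ha, b, hb, hab, hu⟩ := h θ hθlam t hinj (Set.Iio θ.ord) (Or.inr rfl)
  set ma := (Ordinal.ToType.mk (o := μ.ord)) ⟨a, ha⟩
  set mb := (Ordinal.ToType.mk (o := μ.ord)) ⟨b, hb⟩
  obtain ⟨p, hp1, hp2⟩ := key ma mb (hidx a ha b hb hab)
  set εs := ((Ordinal.ToType.mk (o := θ.ord))).symm (g.symm p) with hεs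
  have hε : εs.val < θ.ord := εs.2
  have hcoord : g ((Ordinal.ToType.mk (o := θ.ord)) ⟨εs.val, hε⟩) = p := by
    have : (⟨εs.val, hε⟩ : Set.Iio θ.ord) = εs := rfl
    rw [this, hεs]
    simp
  have hlt : t εs.val a < t εs.val b := (hu εs.val hε).mpr hε
  rw [teval εs.val hε a ha, teval εs.val hε b hb, hcoord] at hlt
  rw [hp1, hp2] at hlt
  simp only [hp1, hp2, if_true, if_false] at hlt
  exact absurd hlt (not_lt_of_gt ((hA mb).trans (hB ma)))
end

section
/- Let θ be an infinite cardinal, λ = θ⁺, and let I be a linear order that is (μ,λ)-positively entangled with minimal such μ and which has a μ-separative point. Then 2^θ < cf μ; in particular λ ≤ cf μ. -/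
universe u v w

open Cardinal Set Order

namespace PosEntAux

open Cardinal Set Order Ordinal

variable {α : Type u} [LinearOrder α]

/-- Injectivity of a coordinate family. -/
def Inj (t : Ordinal.{u} → Ordinal.{u} → α) (σo νo : Ordinal.{u}) : Prop :=
  ∀ ε, ε < σo → ∀ i, i < νo → ∀ j, j < νo → i ≠ j → t ε i ≠ t ε j

/-- No good pair for the constant type `b` (`true` = increasing on all
coordinates, `false` = non-increasing on all coordinates). -/
def NoGood (b : Bool) (t : Ordinal.{u} → Ordinal.{u} → α) (σo νo : Ordinal.{u}) : Prop :=
  ∀ p, p < νo → ∀ q, q < νo → p < q →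
    ¬ (∀ ε, ε < σo → (t ε p < t ε q ↔ b = true))

theorem Inj.mono {t : Ordinal.{u} → Ordinal.{u} → α} {σo νo νo' : Ordinal.{u}}
    (h : Inj t σo νo) (hν : νo' ≤ νo) : Inj t σo νo' :=
  fun ε hε i hi j hj hij => h ε hε i (hi.trans_le hν) j (hj.trans_le hν) hij

theorem NoGood.mono {b : Bool} {t : Ordinal.{u} → Ordinal.{u} → α} {σo νo νo' : Ordinal.{u}}
    (h : NoGood b t σo νo) (hν : νo' ≤ νo) : NoGood b t σo νo' :=
  fun p hp q hq hpq => h p (hp.trans_le hν) q (hq.trans_le hν) hpq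

/-- From a failure of positive entangledness, extract a normalized
counterexample with coordinate set `θ.ord`. -/
theorem normalize {θ ν : Cardinal.{u}} (hθ : ℵ₀ ≤ θ) (hν : 2 ≤ ν)
    (hne : ¬ IsPosEntangled α ν (Order.succ θ)) :
    ∃ (b : Bool) (t : Ordinal.{u} → Ordinal.{u} → α),
      Inj t θ.ord ν.ord ∧ NoGood b t θ.ord ν.ord := by
  rw [IsPosEntangled] at hne
  push_neg at hne
  obtain ⟨σ₁, hσ₁, t, hinj, u, hu, hng⟩ := hne
  have hσθ : σ₁ ≤ θ := Order.lt_succ_iff.mp hσ₁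
  have hσθo : σ₁.ord ≤ θ.ord := Cardinal.ord_le_ord.mpr hσθ
  have h0ν : (0 : Ordinal) < ν.ord := by
    rw [Cardinal.lt_ord]
    simpa using lt_of_lt_of_le (by norm_num) hν
  have h1ν : (1 : Ordinal) < ν.ord := by
    rw [Cardinal.lt_ord]
    simpa using lt_of_lt_of_le (by norm_num) hν
  have hσ0 : (0 : Ordinal) < σ₁.ord := by
    obtain ⟨ε, hε, -⟩ := hng 0 h0ν 1 h1ν zero_lt_one
    exact lt_of_le_of_lt (zero_le : (0 : Ordinal) ≤ ε) hε
  have hpad : Inj (fun ε i => t (if ε < σ₁.ord then ε else 0) i) θ.ord ν.ord := by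
    intro ε hε i hi j hj hij
    show t (if ε < σ₁.ord then ε else 0) i ≠ t (if ε < σ₁.ord then ε else 0) j
    split_ifs with hc
    · exact hinj ε hc i hi j hj hij
    · exact hinj 0 hσ0 i hi j hj hij
  rcases hu with rfl | rfl
  · refine ⟨false, fun ε i => t (if ε < σ₁.ord then ε else 0) i, hpad, ?_⟩
    intro p hp q hq hpq hgood
    obtain ⟨ε, hε, hbad⟩ := hng p hp q hq hpq
    have h2 := hgood ε (hε.trans_le hσθo)
    simp only [if_pos hε, Bool.false_eq_true, iff_false] at h2
    rcases hbad with ⟨hlt, -⟩ | ⟨-, hmem⟩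
    · exact h2 hlt
    · exact hmem
  · refine ⟨true, fun ε i => t (if ε < σ₁.ord then ε else 0) i, hpad, ?_⟩
    intro p hp q hq hpq hgood
    obtain ⟨ε, hε, hbad⟩ := hng p hp q hq hpq
    have h2 := hgood ε (hε.trans_le hσθo)
    simp only [if_pos hε, iff_true] at h2
    rcases hbad with ⟨-, hmem⟩ | ⟨hle, -⟩
    · exact hmem hε
    · exact absurd h2 (not_lt_of_ge hle)

/-- There is a single type `b` of counterexample working cofinally (hence
everywhere, by restriction) below `μ`. -/
theorem uniform {θ μ : Cardinal.{u}} (hθ : ℵ₀ ≤ θ) (hμ : ℵ₀ ≤ μ)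
    (hmin : ∀ μ' < μ, ¬ IsPosEntangled α μ' (Order.succ θ)) :
    ∃ b : Bool, ∀ ν < μ, ∃ t : Ordinal.{u} → Ordinal.{u} → α,
      Inj t θ.ord ν.ord ∧ NoGood b t θ.ord ν.ord := by
  by_contra hcon
  push_neg at hcon
  obtain ⟨ν₁, hν₁μ, hν₁⟩ := hcon true
  obtain ⟨ν₂, hν₂μ, hν₂⟩ := hcon false
  set ν := max (max ν₁ ν₂) 2 with hνdef
  have hνμ : ν < μ := by
    have h2μ : (2 : Cardinal) < μ := lt_of_lt_of_le (by exact_mod_cast Cardinal.nat_lt_aleph0 2) hμ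
    exact max_lt (max_lt hν₁μ hν₂μ) h2μ
  have h2ν : (2 : Cardinal) ≤ ν := le_max_right _ _
  obtain ⟨b, t, hinj, hng⟩ := normalize hθ h2ν (hmin ν hνμ)
  have hord₁ : ν₁.ord ≤ ν.ord := Cardinal.ord_le_ord.mpr ((le_max_left _ _).trans (le_max_left _ _))
  have hord₂ : ν₂.ord ≤ ν.ord := Cardinal.ord_le_ord.mpr ((le_max_right _ _).trans (le_max_left _ _))
  cases b
  · exact hν₂ t (hinj.mono hord₂) (hng.mono hord₂)
  · exact hν₁ t (hinj.mono hord₁) (hng.mono hord₁)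

/-- Injectively enumerate `μ.ord`-many members of a set of size `≥ μ`. -/
theorem exists_inj_into (x : α) {μ : Cardinal.{u}} {s : Set α} (hs : μ ≤ #s) :
    ∃ g : Ordinal.{u} → α, (∀ i, i < μ.ord → g i ∈ s) ∧
      (∀ i, i < μ.ord → ∀ j, j < μ.ord → i ≠ j → g i ≠ g j) := by
  have hmk : Cardinal.lift.{u} #(Set.Iio μ.ord) ≤ Cardinal.lift.{u + 1} #s := by
    rw [Ordinal.mk_Iio_ordinal, Cardinal.card_ord, Cardinal.lift_lift]
    exact Cardinal.lift_le.mpr hs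
  obtain ⟨e⟩ : Nonempty (Set.Iio μ.ord ↪ s) := Cardinal.lift_mk_le'.mp hmk
  refine ⟨fun i => if h : i < μ.ord then (e ⟨i, h⟩ : α) else x, ?_, ?_⟩
  · intro i hi
    show (if h : i < μ.ord then (e ⟨i, h⟩ : α) else x) ∈ s
    rw [dif_pos hi]
    exact (e ⟨i, hi⟩).2
  · intro i hi j hj hij
    show (if h : i < μ.ord then (e ⟨i, h⟩ : α) else x) ≠
      (if h : j < μ.ord then (e ⟨j, h⟩ : α) else x)
    rw [dif_pos hi, dif_pos hj]
    intro hcon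
    exact hij (congrArg Subtype.val (e.injective (Subtype.ext hcon)))

/-- The coded coordinate values distinguish distinct indices. -/
theorem code_ne {x v₁ v₂ w₁ w₂ : α} (hv₁ : v₁ < x) (hv₂ : v₂ < x) (hw₁ : x < w₁)
    (hw₂ : x < w₂) (hvv : v₁ ≠ v₂) (hww : w₁ ≠ w₂) (c₁ c₂ : Prop) [Decidable c₁] [Decidable c₂] :
    (if c₁ then v₁ else w₁) ≠ (if c₂ then v₂ else w₂) := by
  split_ifs
  · exact hvv
  · exact ne_of_lt (hv₁.trans hw₂)
  · exact (ne_of_lt (hv₂.trans hw₁)).symm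
  · exact hww

/-- Injectively enumerate `μ.ord`-many members of a type of size `≥ μ`. -/
theorem exists_inj_fun {β : Type u} [Nonempty β] {μ : Cardinal.{u}} (hs : μ ≤ #β) :
    ∃ g : Ordinal.{u} → β,
      ∀ i, i < μ.ord → ∀ j, j < μ.ord → i ≠ j → g i ≠ g j := by
  have hmk : Cardinal.lift.{u} #(Set.Iio μ.ord) ≤ Cardinal.lift.{u + 1} #β := by
    rw [Ordinal.mk_Iio_ordinal, Cardinal.card_ord, Cardinal.lift_lift]
    exact Cardinal.lift_le.mpr hs
  obtain ⟨e⟩ : Nonempty (Set.Iio μ.ord ↪ β) := Cardinal.lift_mk_le'.mp hmk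
  refine ⟨fun i => if h : i < μ.ord then e ⟨i, h⟩ else Classical.arbitrary β, ?_⟩
  intro i hi j hj hij
  show (if h : i < μ.ord then e ⟨i, h⟩ else Classical.arbitrary β) ≠
    (if h : j < μ.ord then e ⟨j, h⟩ else Classical.arbitrary β)
  rw [dif_pos hi, dif_pos hj]
  intro hcon
  exact hij (congrArg Subtype.val (e.injective hcon))

/-- Step 1: the separative point forces `2 ^ θ < μ`. -/
theorem two_power_lt {θ μ : Cardinal.{u}} (hθ : ℵ₀ ≤ θ)
    (h : IsPosEntangled α μ (Order.succ θ)) (x : α) (hx : Separative α μ x) :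
    2 ^ θ < μ := by
  by_contra hle
  push_neg at hle
  have hT : #(θ.ord.ToType) = θ := Cardinal.mk_ord_toType θ
  have h2θ : (2 : Cardinal.{u}) ≤ θ :=
    le_trans (le_of_lt (by exact_mod_cast Cardinal.nat_lt_aleph0 2)) hθ
  have hmkIio : #(Set.Iio θ.ord) = Cardinal.lift.{u + 1} θ := by
    rw [Ordinal.mk_Iio_ordinal, Cardinal.card_ord]
  have hBT : #(Bool × θ.ord.ToType) = θ := by
    rw [Cardinal.mk_prod, Cardinal.mk_bool, hT]
    simp only [Cardinal.lift_id, Cardinal.lift_ofNat, Cardinal.lift_id']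
    exact Cardinal.mul_eq_right hθ h2θ two_ne_zero
  obtain ⟨E⟩ : Nonempty (Set.Iio θ.ord ≃ ULift.{u + 1} (Bool × θ.ord.ToType)) := by
    apply Cardinal.eq.mp
    rw [hmkIio, Cardinal.mk_uLift, hBT]
  have hfun : μ ≤ #(θ.ord.ToType → Bool) := by
    have harr : #(θ.ord.ToType → Bool) = 2 ^ θ := by
      rw [Cardinal.mk_arrow, Cardinal.mk_bool, hT]
      simp only [Cardinal.lift_id, Cardinal.lift_ofNat, Cardinal.lift_id']
    rw [harr]
    exact hle
  obtain ⟨η, hηinj⟩ := exists_inj_fun hfun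
  obtain ⟨af, hafmem, hafinj⟩ := exists_inj_into x hx.1
  obtain ⟨bf, hbfmem, hbfinj⟩ := exists_inj_into x hx.2
  set t : Ordinal.{u} → Ordinal.{u} → α := fun ε i =>
    if hε : ε ∈ Set.Iio θ.ord then
      if hi : i < μ.ord then
        if η i (E ⟨ε, hε⟩).down.2 = (E ⟨ε, hε⟩).down.1 then af i else bf i
      else x
    else x with htdef
  have htinj : ∀ ε, ε < θ.ord → ∀ i, i < μ.ord → ∀ j, j < μ.ord → i ≠ j →
      t ε i ≠ t ε j := by
    intro ε hε i hi j hj hij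
    simp only [htdef]
    rw [dif_pos (show ε ∈ Set.Iio θ.ord from hε), dif_pos hi,
      dif_pos (show ε ∈ Set.Iio θ.ord from hε), dif_pos hj]
    exact code_ne (hafmem i hi) (hafmem j hj) (hbfmem i hi) (hbfmem j hj)
      (hafinj i hi j hj hij) (hbfinj i hi j hj hij) _ _
  obtain ⟨p, hp, q, hq, hpq, hgood⟩ :=
    h θ (Order.lt_succ θ) t htinj (Set.Iio θ.ord) (Or.inr rfl)
  obtain ⟨τ, hτ⟩ := Function.ne_iff.mp (hηinj p hp q hq hpq.ne)
  set ε0 : Set.Iio θ.ord := E.symm ⟨(η q τ, τ)⟩ with hε0def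
  have hEp : E ⟨ε0.1, ε0.2⟩ = ULift.up (η q τ, τ) := E.apply_symm_apply _
  have h1 : t ε0.1 p < t ε0.1 q := by
    have := hgood ε0.1 ε0.2
    simpa [ε0.2] using this
  have ht1 : t ε0.1 p = bf p := by
    simp only [htdef]
    rw [dif_pos ε0.2, dif_pos hp, hEp]
    exact if_neg hτ
  have ht2 : t ε0.1 q = af q := by
    simp only [htdef]
    rw [dif_pos ε0.2, dif_pos hq, hEp]
    exact if_pos rfl
  rw [ht1, ht2] at h1
  exact lt_irrefl x (((hbfmem p hp).trans h1).trans (hafmem q hq))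

end PosEntAux
/-- Theorem 3.5: if `I` is `(μ,θ⁺)`-positively entangled with minimal `μ` and
has a `μ`-separative point, then `2^θ < cf μ`; in particular `θ⁺ ≤ cf μ`. -/
theorem pos_two_pow_lt_cof (α : Type u) [LinearOrder α] (θ μ : Cardinal.{u})
    (hθ : ℵ₀ ≤ θ)
    (h : IsPosEntangled α μ (Order.succ θ))
    (hmin : ∀ μ' < μ, ¬ IsPosEntangled α μ' (Order.succ θ))
    (x : α) (hx : Separative α μ x) :
    (2 : Cardinal.{u}) ^ θ < μ.ord.cof ∧ Order.succ θ ≤ μ.ord.cof := by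
  classical
  have h2 : 2 ^ θ < μ := PosEntAux.two_power_lt hθ h x hx
  have hsucc2 : Order.succ θ ≤ 2 ^ θ := Order.succ_le_of_lt (Cardinal.cantor θ)
  suffices hmain : 2 ^ θ < μ.ord.cof from ⟨hmain, hsucc2.trans hmain.le⟩
  by_contra hcof
  push_neg at hcof
  have hθ2 : ℵ₀ ≤ 2 ^ θ := hθ.trans (Cardinal.cantor θ).le
  have hμinf : ℵ₀ ≤ μ := hθ2.trans h2.le
  -- μ is a limit cardinal
  have hμlim : ∀ ρ, ρ < μ → Order.succ ρ < μ := by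
    intro ρ hρ
    by_contra hcon
    push_neg at hcon
    have hμeq : μ = Order.succ ρ := le_antisymm hcon (Order.succ_le_of_lt hρ)
    have hρinf : ℵ₀ ≤ ρ := by
      by_contra hfin
      push_neg at hfin
      obtain ⟨n, rfl⟩ := Cardinal.lt_aleph0.mp hfin
      have : μ < ℵ₀ := by
        rw [hμeq, Cardinal.succ_natCast]
        exact_mod_cast Cardinal.nat_lt_aleph0 (n + 1)
      exact absurd hμinf this.not_ge
    have hreg := Cardinal.isRegular_succ hρinf
    rw [hμeq] at hcof
    rw [hreg.cof_eq] at hcof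
    exact absurd (hμeq ▸ h2) hcof.not_gt
  have hlimord : Order.IsSuccLimit (μ.ord) := Cardinal.isSuccLimit_ord hμinf
  -- uniform counterexamples below μ
  obtain ⟨b, hfam⟩ := PosEntAux.uniform hθ hμinf hmin
  -- a cofinal family indexed by W
  obtain ⟨ι, f0, hlsub, hcard⟩ := Ordinal.exists_lsub_cof μ.ord
  have hWcard : #((μ.ord.cof).ord.ToType) = μ.ord.cof := Cardinal.mk_ord_toType _
  obtain ⟨e⟩ : Nonempty ((μ.ord.cof).ord.ToType ≃ ι) := Cardinal.eq.mp (by rw [hWcard, hcard])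
  set W := (μ.ord.cof).ord.ToType with hWdef
  haveI hWwo : IsWellOrder W ((· < ·) : W → W → Prop) :=
    isWellOrder_lt
  set f : W → Ordinal.{u} := fun w => f0 (e w) with hfdef
  have hfw : ∀ w, f w < μ.ord := fun w => hlsub ▸ Ordinal.lt_lsub f0 (e w)
  have hcov : ∀ i, i < μ.ord → ∃ w : W, i ≤ f w := by
    intro i hi
    rw [← hlsub] at hi
    obtain ⟨j, hj⟩ := Ordinal.lt_lsub_iff.mp hi
    exact ⟨e.symm j, by simpa [hfdef] using hj⟩
  choose blk hblk using hcov
  -- recursion for block sizes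
  have wfW : WellFounded ((· < ·) : W → W → Prop) := wellFounded_lt
  set ν : W → Cardinal.{u} := wfW.fix
    (fun w rec => Order.succ (2 ^ θ + (f w).card + ⨆ w' : {w' : W // w' < w}, rec w'.1 w'.2))
    with hνdef
  have hνeq : ∀ w, ν w =
      Order.succ (2 ^ θ + (f w).card + ⨆ w' : {w' : W // w' < w}, ν w'.1) := by
    intro w
    rw [hνdef]
    exact wfW.fix_eq _ w
  have hbaseν : ∀ w,
      2 ^ θ + (f w).card + (⨆ w' : {w' : W // w' < w}, ν w'.1) < ν w := by
    intro w
    conv_rhs => rw [hνeq w]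
    exact Order.lt_succ _
  have hν2θ : ∀ w, 2 ^ θ < ν w := by
    intro w
    refine lt_of_le_of_lt ?_ (hbaseν w)
    exact le_add_right (le_add_right le_rfl)
  have hνinf : ∀ w, ℵ₀ ≤ ν w := fun w => hθ2.trans (hν2θ w).le
  have hνfcard : ∀ w, (f w).card < ν w := by
    intro w
    refine lt_of_le_of_lt ?_ (hbaseν w)
    exact le_add_right (le_add_left le_rfl)
  have hνsup : ∀ w, (⨆ w' : {w' : W // w' < w}, ν w'.1) < ν w := by
    intro w
    exact lt_of_le_of_lt (le_add_left le_rfl) (hbaseν w)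
  have hκsub : ∀ w : W, #{w' : W // w' < w} < μ.ord.cof := by
    intro w
    have h1 : #{w' : W // w' < w} = (Ordinal.typein (· < ·) w).card :=
      Ordinal.card_typein w
    rw [h1, ← Cardinal.lt_ord]
    have h2' := Ordinal.typein_lt_type ((· < ·) : W → W → Prop) w
    rwa [Ordinal.type_toType] at h2'
  have hνμ : ∀ w, ν w < μ := by
    intro w
    induction w using wfW.induction with
    | _ w ih =>
      rw [hνeq w]
      apply hμlim
      refine Cardinal.add_lt_of_lt hμinf (Cardinal.add_lt_of_lt hμinf h2 ?_) ?_
      · exact Cardinal.lt_ord.mp (hfw w)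
      · exact Ordinal.iSup_lt (hκsub w) fun w' => ih w'.1 w'.2
  -- coding of blocks
  have harrow : #(θ.ord.ToType → Bool) = 2 ^ θ := by
    rw [Cardinal.mk_arrow, Cardinal.mk_bool, Cardinal.mk_ord_toType]
    simp only [Cardinal.lift_id, Cardinal.lift_ofNat, Cardinal.lift_id']
  obtain ⟨η⟩ : Nonempty (W ↪ (θ.ord.ToType → Bool)) := by
    apply (Cardinal.le_def _ _).mp
    rw [hWcard, harrow]
    exact hcof
  -- the two sides of the separative point
  obtain ⟨af, hafmem, hafinj⟩ := PosEntAux.exists_inj_into x hx.1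
  obtain ⟨bf, hbfmem, hbfinj⟩ := PosEntAux.exists_inj_into x hx.2
  -- counterexample family for each block
  have hfam' : ∀ w : W, ∃ t : Ordinal.{u} → Ordinal.{u} → α,
      PosEntAux.Inj t θ.ord (ν w).ord ∧ PosEntAux.NoGood b t θ.ord (ν w).ord :=
    fun w => hfam (ν w) (hνμ w)
  choose Fb hFbinj hFbng using hfam'
  -- pruning collisions between blocks
  set bad : W → Set Ordinal.{u} := fun w =>
    {γ | γ < (ν w).ord ∧ ∃ ε, ε < θ.ord ∧ ∃ w', w' < w ∧ ∃ γ', γ' < (ν w').ord ∧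
      Fb w ε γ = Fb w' ε γ'} with hbaddef
  set good : W → Set Ordinal.{u} := fun w => Set.Iio (ν w).ord \ bad w with hgooddef
  set G : W → Set Ordinal.{u} := fun w => good w ∪ Set.Ici (ν w).ord with hGdef
  have hGunb : ∀ w, ¬ BddAbove (G w) := by
    intro w hbdd
    obtain ⟨B, hB⟩ := hbdd
    have h1 : max (ν w).ord (Order.succ B) ∈ G w := Or.inr (Set.mem_Ici.mpr (le_max_left _ _))
    have h2' : Order.succ B ≤ B := (le_max_right _ _).trans (hB h1)
    exact lt_irrefl B (Order.succ_le_iff.mp h2')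
  set emb : W → Ordinal.{u} → Ordinal.{u} := fun w => Ordinal.enumOrd (G w) with hembdef
  have hembmono : ∀ w, StrictMono (emb w) := fun w => Ordinal.enumOrd_strictMono (hGunb w)
  -- counting: bad is small
  have hbadcard : ∀ w, #(bad w) < Cardinal.lift.{u + 1} (ν w) := by
    intro w
    set S : Cardinal.{u} := ⨆ w' : {w' : W // w' < w}, ν w'.1 with hSdef
    have hex : ∀ γ : bad w,
        ∃ d : Set.Iio θ.ord × (ULift.{u + 1} {w' : W // w' < w} × Set.Iio S.ord),
          Fb w d.1.1 γ.1 = Fb d.2.1.down.1 d.1.1 d.2.2.1 := by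
      intro γ
      obtain ⟨-, ε, hε, w', hw', γ', hγ', heq⟩ := γ.2
      have hγS : γ' < S.ord := by
        refine hγ'.trans_le (Cardinal.ord_le_ord.mpr ?_)
        exact le_ciSup (Cardinal.bddAbove_range _) (⟨w', hw'⟩ : {w'' : W // w'' < w})
      exact ⟨⟨⟨ε, hε⟩, ⟨⟨w', hw'⟩⟩, ⟨γ', hγS⟩⟩, heq⟩
    choose dfun hdfun using hex
    have hinj3 : Function.Injective dfun := by
      intro γ1 γ2 hd
      have h1' := hdfun γ1
      rw [hd] at h1'
      have heq2 : Fb w (dfun γ2).1.1 γ1.1 = Fb w (dfun γ2).1.1 γ2.1 :=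
        h1'.trans (hdfun γ2).symm
      apply Subtype.ext
      by_contra hne
      exact hFbinj w (dfun γ2).1.1 (dfun γ2).1.2 γ1.1 γ1.2.1 γ2.1 γ2.2.1 hne heq2
    have hc1 : #(bad w) ≤ #(Set.Iio θ.ord × (ULift.{u + 1} {w' : W // w' < w} × Set.Iio S.ord)) :=
      Cardinal.mk_le_of_injective hinj3
    have hc2 : #(Set.Iio θ.ord × (ULift.{u + 1} {w' : W // w' < w} × Set.Iio S.ord)) =
        Cardinal.lift.{u + 1} (θ * (#{w' : W // w' < w} * S.ord.card)) := by
      rw [Cardinal.mk_prod, Cardinal.mk_prod, Cardinal.mk_uLift,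
        Ordinal.mk_Iio_ordinal, Ordinal.mk_Iio_ordinal, Cardinal.card_ord,
        Cardinal.lift_mul, Cardinal.lift_mul]
      simp [Cardinal.lift_lift]
    rw [hc2] at hc1
    refine lt_of_le_of_lt hc1 ?_
    rw [Cardinal.lift_lt]
    set base : Cardinal.{u} := 2 ^ θ + (f w).card + S with hbasedef
    have hbinf : ℵ₀ ≤ base := hθ2.trans (le_add_right (le_add_right le_rfl))
    have hb1 : θ ≤ base :=
      ((Cardinal.cantor θ).le).trans (le_add_right (le_add_right le_rfl))
    have hb2 : #{w' : W // w' < w} ≤ base :=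
      ((hκsub w).le.trans hcof).trans (le_add_right (le_add_right le_rfl))
    have hb3 : S.ord.card ≤ base := by
      rw [Cardinal.card_ord]
      exact le_add_left le_rfl
    have hmul : θ * (#{w' : W // w' < w} * S.ord.card) ≤ base := by
      calc θ * (#{w' : W // w' < w} * S.ord.card) ≤ base * (base * base) := by
            exact mul_le_mul' hb1 (mul_le_mul' hb2 hb3)
        _ = base := by
            rw [Cardinal.mul_eq_self hbinf, Cardinal.mul_eq_self hbinf]
    refine hmul.trans_lt ?_
    conv_rhs => rw [hνeq w]
    exact Order.lt_succ _
  -- counting: good is big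
  have hgoodcard : ∀ w, Cardinal.lift.{u + 1} (ν w) ≤ #(good w) := by
    intro w
    by_contra hlt
    push_neg at hlt
    have hsub : Set.Iio (ν w).ord ⊆ good w ∪ bad w := by
      intro γ hγ
      by_cases hbγ : γ ∈ bad w
      · exact Or.inr hbγ
      · exact Or.inl ⟨hγ, hbγ⟩
    have h1' : Cardinal.lift.{u + 1} (ν w) ≤ #((good w ∪ bad w : Set Ordinal.{u})) := by
      have := Cardinal.mk_le_mk_of_subset hsub
      rwa [Ordinal.mk_Iio_ordinal, Cardinal.card_ord] at this
    have h2' := Cardinal.mk_union_le (good w) (bad w)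
    have h3' : #(good w) + #(bad w) < Cardinal.lift.{u + 1} (ν w) :=
      Cardinal.add_lt_of_lt (Cardinal.aleph0_le_lift.mpr (hνinf w)) hlt (hbadcard w)
    exact absurd (h1'.trans h2') h3'.not_ge
  -- the enumeration of good indices
  have hkey : ∀ w, ∀ ξ, ξ ≤ f w → emb w ξ ∈ good w := by
    intro w ξ hξ
    by_contra hnot
    have hmem := Ordinal.enumOrd_mem (hGunb w) ξ
    have hIci : (ν w).ord ≤ emb w ξ := by
      rcases hmem with hg | hg
      · exact absurd hg hnot
      · exact hg
    have hsur : ∀ g : good w, ∃ ζ, emb w ζ = g.1 :=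
      fun g => Ordinal.enumOrd_surjective (hGunb w) (Or.inl g.2)
    choose pick hpick using hsur
    have hpicklt : ∀ g, pick g < ξ := by
      intro g
      by_contra hge
      push_neg at hge
      have hmono := (hembmono w).monotone hge
      rw [hpick g] at hmono
      exact absurd (hIci.trans hmono) (not_le_of_gt (Set.mem_Iio.mp g.2.1))
    have hinj2 : Function.Injective (fun g : good w => (⟨pick g, hpicklt g⟩ : Set.Iio ξ)) := by
      intro g1 g2 hgg
      apply Subtype.ext
      have : pick g1 = pick g2 := congrArg Subtype.val hgg
      rw [← hpick g1, ← hpick g2, this]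
    have hcard1 : #(good w) ≤ #(Set.Iio ξ) := Cardinal.mk_le_of_injective hinj2
    rw [Ordinal.mk_Iio_ordinal] at hcard1
    have hcard2 := (hgoodcard w).trans hcard1
    rw [Cardinal.lift_le] at hcard2
    have : ν w ≤ (f w).card := hcard2.trans (Ordinal.card_le_card hξ)
    exact absurd this (hνfcard w).not_ge
  -- the coordinate decoding
  obtain ⟨E⟩ : Nonempty
      (Set.Iio θ.ord ≃ ULift.{u + 1} ((Bool × θ.ord.ToType) ⊕ θ.ord.ToType)) := by
    apply Cardinal.eq.mp
    have hBT : #(Bool × θ.ord.ToType) = θ := by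
      rw [Cardinal.mk_prod, Cardinal.mk_bool, Cardinal.mk_ord_toType]
      simp only [Cardinal.lift_id, Cardinal.lift_ofNat, Cardinal.lift_id']
      exact Cardinal.mul_eq_right hθ
        (le_trans (le_of_lt (by exact_mod_cast Cardinal.nat_lt_aleph0 2)) hθ) two_ne_zero
    rw [Ordinal.mk_Iio_ordinal, Cardinal.card_ord, Cardinal.mk_uLift, Cardinal.mk_sum, hBT,
      Cardinal.mk_ord_toType]
    simp only [Cardinal.lift_id]
    rw [Cardinal.add_eq_right hθ le_rfl]
  set ordOf : θ.ord.ToType → Ordinal.{u} := fun ζ => ((Ordinal.ToType.mk (o := θ.ord)).symm ζ).1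
    with hordOfdef
  have hordOflt : ∀ ζ, ordOf ζ < θ.ord := fun ζ => ((Ordinal.ToType.mk (o := θ.ord)).symm ζ).2
  have hordOfsurj : ∀ ε, ε < θ.ord → ∃ ζ, ordOf ζ = ε := by
    intro ε hε
    refine ⟨(Ordinal.ToType.mk (o := θ.ord)) ⟨ε, hε⟩, ?_⟩
    rw [hordOfdef]
    simp
  -- the merged family
  set t : Ordinal.{u} → Ordinal.{u} → α := fun ε i =>
    if hε : ε ∈ Set.Iio θ.ord then
      if hi : i < μ.ord then
        Sum.elim
          (fun pr => if η (blk i hi) pr.2 = pr.1 then af i else bf i)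
          (fun ζ => Fb (blk i hi) (ordOf ζ) (emb (blk i hi) i))
          (E ⟨ε, hε⟩).down
      else x
    else x with htdef
  have htval : ∀ (i : Ordinal.{u}) (hi : i < μ.ord)
      (s : (Bool × θ.ord.ToType) ⊕ θ.ord.ToType),
      t (E.symm ⟨s⟩).1 i = Sum.elim
        (fun pr => if η (blk i hi) pr.2 = pr.1 then af i else bf i)
        (fun ζ => Fb (blk i hi) (ordOf ζ) (emb (blk i hi) i)) s := by
    intro i hi s
    simp only [htdef]
    rw [dif_pos (E.symm ⟨s⟩).2, dif_pos hi]
    rw [show E ⟨(E.symm ⟨s⟩).1, (E.symm ⟨s⟩).2⟩ = ⟨s⟩ from E.apply_symm_apply ⟨s⟩]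
  have htinj : ∀ ε, ε < θ.ord → ∀ i, i < μ.ord → ∀ j, j < μ.ord → i ≠ j →
      t ε i ≠ t ε j := by
    intro ε hε i hi j hj hij
    simp only [htdef]
    rw [dif_pos (show ε ∈ Set.Iio θ.ord from hε), dif_pos hi,
      dif_pos (show ε ∈ Set.Iio θ.ord from hε), dif_pos hj]
    rcases hsE : (E ⟨ε, show ε ∈ Set.Iio θ.ord from hε⟩).down with pr | ζ
    · simp only [Sum.elim_inl]
      exact PosEntAux.code_ne (hafmem i hi) (hafmem j hj) (hbfmem i hi) (hbfmem j hj)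
        (hafinj i hi j hj hij) (hbfinj i hi j hj hij) _ _
    · simp only [Sum.elim_inr]
      rcases lt_trichotomy (blk i hi) (blk j hj) with hlt | heqb | hgt
      · intro hcon
        have hbadmem : emb (blk j hj) j ∈ bad (blk j hj) :=
          ⟨(hkey (blk j hj) j (hblk j hj)).1, ordOf ζ, hordOflt ζ, blk i hi, hlt,
            emb (blk i hi) i, (hkey (blk i hi) i (hblk i hi)).1, hcon.symm⟩
        exact (hkey (blk j hj) j (hblk j hj)).2 hbadmem
      · rw [heqb]
        have hne : emb (blk j hj) i ≠ emb (blk j hj) j := (hembmono (blk j hj)).injective.ne hij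
        refine hFbinj (blk j hj) (ordOf ζ) (hordOflt ζ) _ ?_ _ ?_ hne
        · exact (hkey (blk j hj) i (heqb ▸ hblk i hi)).1
        · exact (hkey (blk j hj) j (hblk j hj)).1
      · intro hcon
        have hbadmem : emb (blk i hi) i ∈ bad (blk i hi) :=
          ⟨(hkey (blk i hi) i (hblk i hi)).1, ordOf ζ, hordOflt ζ, blk j hj, hgt,
            emb (blk j hj) j, (hkey (blk j hj) j (hblk j hj)).1, hcon⟩
        exact (hkey (blk i hi) i (hblk i hi)).2 hbadmem
  -- apply entangledness to the merged family
  obtain ⟨p, hp, q, hq, hpq, hgood2⟩ :=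
    h θ (Order.lt_succ θ) t htinj (cond b (Set.Iio θ.ord) ∅)
      (by cases b
          · exact Or.inl rfl
          · exact Or.inr rfl)
  have hrel : ∀ ε, ε < θ.ord → (t ε p < t ε q ↔ b = true) := by
    intro ε hε
    have hthis := hgood2 ε hε
    cases b
    · simpa using hthis
    · simpa [hε] using hthis
  rcases eq_or_ne (blk p hp) (blk q hq) with hbw | hbw
  · -- same block
    have hplef : p ≤ f (blk q hq) := hbw ▸ hblk p hp
    have hep : emb (blk q hq) p ∈ good (blk q hq) := hkey _ p hplef
    have heq' : emb (blk q hq) q ∈ good (blk q hq) := hkey _ q (hblk q hq)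
    refine hFbng (blk q hq) (emb (blk q hq) p) hep.1 (emb (blk q hq) q) heq'.1
      ((hembmono (blk q hq)) hpq) ?_
    intro ε' hε'
    obtain ⟨ζ, rfl⟩ := hordOfsurj ε' hε'
    have hvp := htval p hp (Sum.inr ζ)
    have hvq := htval q hq (Sum.inr ζ)
    simp only [Sum.elim_inr] at hvp hvq
    have hthis := hrel (E.symm ⟨Sum.inr ζ⟩).1 (E.symm ⟨Sum.inr ζ⟩).2
    rw [hvp, hvq, hbw] at hthis
    exact hthis
  · -- different blocks
    obtain ⟨τ, hτ⟩ := Function.ne_iff.mp (η.injective.ne hbw)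
    cases b
    · -- type ∅ : exhibit a strictly increasing coordinate
      have hvp := htval p hp (Sum.inl (η (blk p hp) τ, τ))
      have hvq := htval q hq (Sum.inl (η (blk p hp) τ, τ))
      simp only [Sum.elim_inl, if_true] at hvp hvq
      rw [if_neg (Ne.symm hτ)] at hvq
      have hthis := hrel (E.symm ⟨Sum.inl (η (blk p hp) τ, τ)⟩).1
        (E.symm ⟨Sum.inl (η (blk p hp) τ, τ)⟩).2
      rw [hvp, hvq] at hthis
      simp only [Bool.false_eq_true, iff_false] at hthis
      exact hthis ((hafmem p hp).trans (hbfmem q hq))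
    · -- type full : exhibit a strictly decreasing coordinate
      have hvp := htval p hp (Sum.inl (η (blk q hq) τ, τ))
      have hvq := htval q hq (Sum.inl (η (blk q hq) τ, τ))
      simp only [Sum.elim_inl, if_true] at hvp hvq
      rw [if_neg hτ] at hvp
      have hthis := hrel (E.symm ⟨Sum.inl (η (blk q hq) τ, τ)⟩).1
        (E.symm ⟨Sum.inl (η (blk q hq) τ, τ)⟩).2
      rw [hvp, hvq] at hthis
      simp only [iff_true] at hthis
      exact lt_irrefl x (((hbfmem p hp).trans hthis).trans (hafmem q hq))
end

section
/- Let λ, μ be infinite cardinals and let I be a linear order that is (μ,λ)-positively entangled with minimal such μ, which has a μ-separative point, and suppose cf μ ≠ cf λ. Then for every infinite cardinal θ < λ, 2^θ < cf μ, and moreover λ < cf μ. -/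
universe u v w

open Cardinal Set Order

set_option linter.unusedSectionVars false

namespace PosSep
open scoped Classical

variable {α : Type u} [LinearOrder α]

lemma exists_inj_fun (a0 : α) {c : Cardinal.{u}} {S : Set α} (hc : c ≤ #S) :
    ∃ f : Ordinal.{u} → α, (∀ i, i < c.ord → f i ∈ S) ∧
      (∀ i, i < c.ord → ∀ j, j < c.ord → i ≠ j → f i ≠ f j) := by
  have h1 : Cardinal.lift.{u} #(Set.Iio c.ord) ≤ Cardinal.lift.{u+1} #(↥S) := by
    rw [Ordinal.mk_Iio_ordinal, Cardinal.card_ord, Cardinal.lift_lift]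
    exact Cardinal.lift_le.2 hc
  obtain ⟨e⟩ := Cardinal.lift_mk_le'.1 h1
  refine ⟨fun i => if h : i < c.ord then (e ⟨i, h⟩ : α) else a0, fun i hi => ?_, ?_⟩
  · simp only [dif_pos hi]; exact (e ⟨i, hi⟩).2
  · intro i hi j hj hij
    simp only [dif_pos hi, dif_pos hj]
    intro hEq
    apply hij
    have := e.injective (Subtype.ext hEq)
    exact congrArg Subtype.val this

/-- injective codes below `κ`, as subsets of `Iio θ.ord`, assuming `κ ≤ 2 ^ θ`. -/
lemma exists_codes {κ θ : Cardinal.{u}} (hκθ : κ ≤ 2 ^ θ) :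
    ∃ code : Ordinal.{u} → Set Ordinal.{u},
      (∀ i, code i ⊆ Set.Iio θ.ord) ∧
      (∀ i, i < κ.ord → ∀ j, j < κ.ord → code i = code j → i = j) := by
  have h1 : #(↥(Set.Iio κ.ord)) ≤ #(Set (↥(Set.Iio θ.ord))) := by
    rw [Ordinal.mk_Iio_ordinal, Cardinal.card_ord, Cardinal.mk_set, Ordinal.mk_Iio_ordinal,
      Cardinal.card_ord, ← Cardinal.lift_two_power]
    exact Cardinal.lift_le.2 hκθ
  obtain ⟨E⟩ := Cardinal.le_def _ _ |>.1 h1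
  refine ⟨fun i => if h : i < κ.ord then
      {ζ | ∃ hζ : ζ < θ.ord, (⟨ζ, hζ⟩ : ↥(Set.Iio θ.ord)) ∈ E ⟨i, h⟩} else ∅, ?_, ?_⟩
  · intro i ζ hζ
    by_cases h : i < κ.ord
    · simp only [dif_pos h] at hζ; exact hζ.1
    · simp only [dif_neg h] at hζ; exact hζ.elim
  · intro i hi j hj hEq
    simp only [dif_pos hi, dif_pos hj] at hEq
    have : E ⟨i, hi⟩ = E ⟨j, hj⟩ := by
      ext ⟨ζ, hζ⟩
      have := Set.ext_iff.1 hEq ζ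
      constructor
      · intro hm; obtain ⟨h', hm'⟩ := this.1 ⟨hζ, hm⟩; exact hm'
      · intro hm; obtain ⟨h', hm'⟩ := this.2 ⟨hζ, hm⟩; exact hm'
    have h2 : (⟨i, hi⟩ : ↥(Set.Iio κ.ord)) = ⟨j, hj⟩ := E.injective this
    exact congrArg Subtype.val h2

set_option linter.unusedSectionVars false

lemma pack2_mod (ζ : Ordinal.{u}) (k : Ordinal.{u}) (hk : k < 2) : (2 * ζ + k) % 2 = k := by
  rw [Ordinal.mul_add_mod_self, Ordinal.mod_eq_of_lt hk]

lemma pack2_div (ζ : Ordinal.{u}) (k : Ordinal.{u}) (hk : k < 2) : (2 * ζ + k) / 2 = ζ := by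
  rw [Ordinal.mul_add_div _ (by norm_num) _, Ordinal.div_eq_zero_of_lt hk, add_zero]

lemma pack_lt_ord {θ : Cardinal.{u}} (hθ : ℵ₀ ≤ θ) {ζ : Ordinal.{u}} (hζ : ζ < θ.ord)
    (n k : Ordinal.{u}) (hn : n < Ordinal.omega0) (hkn : k < Ordinal.omega0) :
    n * ζ + k < θ.ord := by
  rw [Cardinal.lt_ord, Ordinal.card_add, Ordinal.card_mul]
  have hζc : ζ.card < θ := Cardinal.lt_ord.1 hζ
  have hnc : n.card < ℵ₀ := by rwa [← Cardinal.lt_ord, Cardinal.ord_aleph0]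
  have hkc : k.card < ℵ₀ := by rwa [← Cardinal.lt_ord, Cardinal.ord_aleph0]
  exact Cardinal.add_lt_of_lt hθ
    (Cardinal.mul_lt_of_lt hθ (hnc.trans_le hθ) hζc) (hkc.trans_le hθ)

/-- Lemma 1: positively entangled + μ-separative point implies `2^θ < μ` for infinite `θ < λ`. -/
lemma two_pow_lt {lam μ : Cardinal.{u}} (hμ : ℵ₀ ≤ μ)
    (h : IsPosEntangled α μ lam) {x : α} (hx : Separative α μ x)
    {θ : Cardinal.{u}} (hθ : ℵ₀ ≤ θ) (hθl : θ < lam) : (2 : Cardinal.{u}) ^ θ < μ := by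
  by_contra hge
  push_neg at hge
  obtain ⟨code, codeSub, codeInj⟩ := exists_codes (κ := μ) (θ := θ) hge
  obtain ⟨fL, hfL, hfLi⟩ := exists_inj_fun x hx.1
  obtain ⟨fR, hfR, hfRi⟩ := exists_inj_fun x hx.2
  have hfLx : ∀ i, i < μ.ord → fL i < x := fun i hi => hfL i hi
  have hfRx : ∀ i, i < μ.ord → x < fR i := fun i hi => hfR i hi
  set T : Ordinal.{u} → Ordinal.{u} → α :=
    fun ε i => if (ε % 2 = 0 ↔ ε / 2 ∈ code i) then fR i else fL i with hT
  have hinj : ∀ ε, ε < θ.ord → ∀ i, i < μ.ord → ∀ j, j < μ.ord → i ≠ j → T ε i ≠ T ε j := by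
    intro ε _ i hi j hj hij
    simp only [hT]
    by_cases h1 : (ε % 2 = 0 ↔ ε / 2 ∈ code i) <;> by_cases h2 : (ε % 2 = 0 ↔ ε / 2 ∈ code j)
    · rw [if_pos h1, if_pos h2]; exact hfRi i hi j hj hij
    · rw [if_pos h1, if_neg h2]; exact ne_of_gt ((hfLx j hj).trans (hfRx i hi))
    · rw [if_neg h1, if_pos h2]; exact ne_of_lt ((hfLx i hi).trans (hfRx j hj))
    · rw [if_neg h1, if_neg h2]; exact hfLi i hi j hj hij
  obtain ⟨a, ha, b, hb, hab, hp⟩ := h θ hθl T hinj (Set.Iio θ.ord) (Or.inr rfl)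
  -- codes of a and b differ
  have hcd : code a ≠ code b := fun hEq => (ne_of_lt hab) (codeInj a ha b hb hEq)
  have : ∃ ζ, ¬ (ζ ∈ code a ↔ ζ ∈ code b) := by
    by_contra hno; push_neg at hno
    exact hcd (Set.ext fun ζ => hno ζ)
  obtain ⟨ζ, hζne⟩ := this
  have hζθ : ζ < θ.ord := by
    rcases Classical.em (ζ ∈ code a) with hm | hm
    · exact codeSub a hm
    · rcases Classical.em (ζ ∈ code b) with hm' | hm'
      · exact codeSub b hm'
      · exact absurd (iff_of_false hm hm') hζne
  have h2ω : (2 : Ordinal.{u}) < Ordinal.omega0 := by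
    exact_mod_cast Ordinal.nat_lt_omega0 2
  have h1ω : (1 : Ordinal.{u}) < Ordinal.omega0 := by
    exact_mod_cast Ordinal.nat_lt_omega0 1
  have h0ω : (0 : Ordinal.{u}) < Ordinal.omega0 := by
    exact_mod_cast Ordinal.nat_lt_omega0 0
  have hε0 : 2 * ζ + 0 < θ.ord := pack_lt_ord hθ hζθ 2 0 h2ω h0ω
  have hε1 : 2 * ζ + 1 < θ.ord := pack_lt_ord hθ hζθ 2 1 h2ω h1ω
  have hp0 := (hp _ hε0).2 hε0
  have hp1 := (hp _ hε1).2 hε1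
  have e0m : (2 * ζ + 0) % 2 = 0 := pack2_mod ζ 0 (by norm_num)
  have e0d : (2 * ζ + 0) / 2 = ζ := pack2_div ζ 0 (by norm_num)
  have e1m : (2 * ζ + 1) % 2 = 1 := pack2_mod ζ 1 (by norm_num)
  have e1d : (2 * ζ + 1) / 2 = ζ := pack2_div ζ 1 (by norm_num)
  rcases Classical.em (ζ ∈ code a) with hma | hma
  · have hmb : ζ ∉ code b := fun hmb => hζne (iff_of_true hma hmb)
    have hva : T (2 * ζ + 0) a = fR a := by
      simp only [hT, e0m, e0d]; simp [hma]
    have hvb : T (2 * ζ + 0) b = fL b := by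
      simp only [hT, e0m, e0d]; simp [hmb]
    rw [hva, hvb] at hp0
    exact absurd hp0 (not_lt_of_gt ((hfLx b hb).trans (hfRx a ha)))
  · have hmb : ζ ∈ code b := by
      rcases Classical.em (ζ ∈ code b) with hh | hh
      · exact hh
      · exact absurd (iff_of_false hma hh) hζne
    have hva : T (2 * ζ + 1) a = fR a := by
      simp only [hT, e1m, e1d]
      simp [hma, (one_ne_zero : (1:Ordinal.{u}) ≠ 0)]
    have hvb : T (2 * ζ + 1) b = fL b := by
      simp only [hT, e1m, e1d]
      simp [hmb, (one_ne_zero : (1:Ordinal.{u}) ≠ 0)]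
    rw [hva, hvb] at hp1
    exact absurd hp1 (not_lt_of_gt ((hfLx b hb).trans (hfRx a ha)))

/-- everything below `lam` is below `μ`. -/
lemma lt_mu_of_lt_lam {lam μ : Cardinal.{u}} (hμ : ℵ₀ ≤ μ)
    (h : IsPosEntangled α μ lam) {x : α} (hx : Separative α μ x)
    {c : Cardinal.{u}} (hc : c < lam) : c < μ := by
  rcases lt_or_ge c ℵ₀ with hfin | hinf
  · exact hfin.trans_le hμ
  · exact (Cardinal.cantor c).trans (two_pow_lt hμ h hx hinf hc)

lemma succ_lt_mu {μ : Cardinal.{u}} (hμ : ℵ₀ ≤ μ) (hκμ : μ.ord.cof < μ)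
    {c : Cardinal.{u}} (hc : c < μ) : Order.succ c < μ := by
  rcases lt_or_ge c ℵ₀ with hfin | hinf
  · exact lt_of_lt_of_le (Cardinal.isSuccLimit_aleph0.succ_lt hfin) hμ
  · have h1 : Order.succ c ≤ μ := Order.succ_le_of_lt hc
    rcases h1.lt_or_eq with h2 | h2
    · exact h2
    · exfalso
      have := (Cardinal.isRegular_succ hinf).cof_eq
      rw [h2] at this
      rw [this] at hκμ
      exact lt_irrefl _ hκμ

lemma aleph0_lt_mu {μ : Cardinal.{u}} (hμ : ℵ₀ ≤ μ) (hκμ : μ.ord.cof < μ) : ℵ₀ < μ :=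
  lt_of_le_of_lt (Ordinal.aleph0_le_cof.2 (Cardinal.isSuccLimit_ord hμ)) hκμ

/-- Extraction of a failure witness from non-entangledness. -/
lemma exists_fail {lam μ : Cardinal.{u}} (hmin : ∀ μ' < μ, ¬ IsPosEntangled α μ' lam)
    {ν : Cardinal.{u}} (hν1 : ℵ₀ ≤ ν) (hν2 : ν < μ) :
    ∃ p : Cardinal.{u} × (Ordinal.{u} → Ordinal.{u} → α) × Set Ordinal.{u},
      p.1 < lam ∧ p.1 ≠ 0 ∧
      (∀ ε, ε < p.1.ord → ∀ i, i < ν.ord → ∀ j, j < ν.ord → i ≠ j → p.2.1 ε i ≠ p.2.1 ε j) ∧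
      (p.2.2 = ∅ ∨ p.2.2 = Set.Iio p.1.ord) ∧
      ¬ ∃ a, a < ν.ord ∧ ∃ b, b < ν.ord ∧ a < b ∧
        ∀ ε, ε < p.1.ord → (p.2.1 ε a < p.2.1 ε b ↔ ε ∈ p.2.2) := by
  have H := hmin ν hν2
  rw [IsPosEntangled] at H
  obtain ⟨σ₁, H⟩ := not_forall.1 H
  obtain ⟨hσlam, H⟩ := Classical.not_imp.mp H
  obtain ⟨t, H⟩ := not_forall.1 H
  obtain ⟨hinj, H⟩ := Classical.not_imp.mp H
  obtain ⟨uu, H⟩ := not_forall.1 H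
  obtain ⟨hu, H⟩ := Classical.not_imp.mp H
  have hν1' : (1 : Ordinal.{u}) < ν.ord := by
    have : Ordinal.omega0 ≤ ν.ord := by
      rw [← Cardinal.ord_aleph0]; exact Cardinal.ord_le_ord.2 hν1
    exact lt_of_lt_of_le (by exact_mod_cast Ordinal.nat_lt_omega0 1) this
  have hσ0 : σ₁ ≠ 0 := by
    intro h0
    apply H
    refine ⟨0, lt_trans zero_lt_one hν1', 1, hν1', zero_lt_one, fun ε hε => ?_⟩
    rw [h0, Cardinal.ord_zero] at hε
    exact absurd hε (zero_le : (0 : Ordinal.{u}) ≤ ε).not_gt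
  exact ⟨⟨σ₁, t, uu⟩, hσlam, hσ0, hinj, hu, H⟩

/-- `typein` with the explicit well-order instance. -/
noncomputable def tyin {o : Ordinal.{u}} (d : o.ToType) : Ordinal.{u} :=
  @Ordinal.typein o.ToType (· < ·) isWellOrder_lt d

lemma tyin_lt {o : Ordinal.{u}} (d : o.ToType) : tyin d < o := Ordinal.typein_lt_self d

lemma tyin_enum (o : Ordinal.{u}) (d0 : Ordinal.{u}) (h : d0 < o) :
    tyin ((Ordinal.ToType.mk (o := o)) ⟨d0, h⟩) = d0 := by
  have := (Ordinal.ToType.mk (o := o)).symm_apply_apply ⟨d0, h⟩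
  exact congrArg Subtype.val this

/-- Lemma W: a uniform width bound on an unbounded set of cardinals below μ. -/
lemma lemma_W {lam μ : Cardinal.{u}} (hμ : ℵ₀ ≤ μ) (hlam : ℵ₀ ≤ lam)
    (hcf : μ.ord.cof ≠ lam.ord.cof) (hκμ : μ.ord.cof < μ)
    (σof : Cardinal.{u} → Cardinal.{u}) (P : Cardinal.{u} → Prop)
    (hσ : ∀ ν, ℵ₀ ≤ ν → ν < μ → σof ν < lam) :
    ∃ σs, σs < lam ∧ ∃ ty : Bool, ∀ c, c < μ →
      ∃ ν, ℵ₀ ≤ ν ∧ ν < μ ∧ σof ν ≤ σs ∧ (P ν ↔ ty = true) ∧ c < ν := by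
  by_contra hW
  push_neg at hW
  have hκinf : ℵ₀ ≤ μ.ord.cof := Ordinal.aleph0_le_cof.2 (Cardinal.isSuccLimit_ord hμ)
  have hℵμ : ℵ₀ < μ := aleph0_lt_mu hμ hκμ
  obtain ⟨flam, hflam⟩ := Ordinal.exists_fundamental_sequence lam.ord
  -- Step 1 : ¬ (cof lam < cof μ)
  have step1 : ¬ lam.ord.cof < μ.ord.cof := by
    intro hρκ
    have hmkI : #(lam.ord.cof.ord.ToType × Bool) < μ.ord.cof := by
      have h1 : #(lam.ord.cof.ord.ToType × Bool) = lam.ord.cof * 2 := by simp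
      rw [h1]
      have hρinf : ℵ₀ ≤ lam.ord.cof := Ordinal.aleph0_le_cof.2 (Cardinal.isSuccLimit_ord hlam)
      calc lam.ord.cof * 2 = lam.ord.cof := by
            apply Cardinal.mul_eq_left hρinf (le_trans (by exact_mod_cast (Cardinal.nat_lt_aleph0 2).le) hρinf) (by norm_num)
        _ < μ.ord.cof := hρκ
    have cd_lt : ∀ d : lam.ord.cof.ord.ToType, (flam (tyin d) (tyin_lt d)).card < lam := by
      intro d
      rw [← Cardinal.lt_ord]
      exact hflam.lt (tyin_lt d)
    set bd : lam.ord.cof.ord.ToType × Bool → Cardinal.{u} := fun i =>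
      Classical.choose (hW _ (cd_lt i.1) i.2) with hbd
    have bd_lt : ∀ i, bd i < μ := fun i =>
      (Classical.choose_spec (hW _ (cd_lt i.1) i.2)).1
    have bd_bound : ∀ i, ∀ ν, ℵ₀ ≤ ν → ν < μ →
        σof ν ≤ (flam (tyin i.1) (tyin_lt i.1)).card → (P ν ↔ i.2 = true) → ν ≤ bd i :=
      fun i => (Classical.choose_spec (hW _ (cd_lt i.1) i.2)).2
    have hS : iSup (fun i : lam.ord.cof.ord.ToType × Bool => (bd i).ord) < μ.ord :=
      Ordinal.iSup_lt_ord hmkI fun i => Cardinal.ord_lt_ord.2 (bd_lt i)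
    set S := iSup (fun i : lam.ord.cof.ord.ToType × Bool => (bd i).ord) with hSdef
    set ν := Order.succ (max ℵ₀ S.card) with hν
    have hνμ : ν < μ := succ_lt_mu hμ hκμ (max_lt hℵμ (Cardinal.lt_ord.1 hS))
    have hνinf : ℵ₀ ≤ ν := le_trans (le_max_left _ _) (Order.le_succ _)
    have hσν : (σof ν).ord < lam.ord := Cardinal.ord_lt_ord.2 (hσ ν hνinf hνμ)
    rw [← hflam.blsub_eq, Ordinal.lt_blsub_iff] at hσν
    obtain ⟨d0, hd0, hle⟩ := hσν
    set dd := (Ordinal.ToType.mk (o := lam.ord.cof.ord)) ⟨d0, hd0⟩ with hdd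
    set ty : Bool := if P ν then true else false with hty
    have hPty : P ν ↔ ty = true := by
      rw [hty]; by_cases hPν : P ν <;> simp [hPν]
    have hνbd : ν ≤ bd (dd, ty) := by
      apply bd_bound (dd, ty) ν hνinf hνμ _ hPty
      show σof ν ≤ _
      rw [← Cardinal.card_ord (σof ν)]
      apply Ordinal.card_le_card
      have : tyin dd = d0 := tyin_enum _ _ hd0
      convert hle using 2
    have hord : ν.ord ≤ S := le_trans (Cardinal.ord_le_ord.2 hνbd)
      (Ordinal.le_iSup (fun i : lam.ord.cof.ord.ToType × Bool => (bd i).ord) (dd, ty))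
    have hcard : ν ≤ S.card := by
      calc ν = ν.ord.card := (Cardinal.card_ord ν).symm
        _ ≤ S.card := Ordinal.card_le_card hord
    have hlt : S.card < ν := lt_of_le_of_lt (le_max_right ℵ₀ S.card) (Order.lt_succ _)
    exact absurd hcard hlt.not_ge
  have hκρ : μ.ord.cof < lam.ord.cof := lt_of_le_of_ne (not_lt.1 step1) hcf
  -- Step 2 : contradiction using a cofinal sequence in μ
  obtain ⟨g, hg⟩ := Ordinal.exists_fundamental_sequence μ.ord
  set m : μ.ord.cof.ord.ToType → Cardinal.{u} := fun j =>
    Order.succ (max ℵ₀ (g (tyin j) (tyin_lt j)).card) with hm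
  have hmμ : ∀ j, m j < μ := by
    intro j
    apply succ_lt_mu hμ hκμ
    apply max_lt hℵμ
    rw [← Cardinal.lt_ord]
    exact hg.lt _
  have hminf : ∀ j, ℵ₀ ≤ m j := fun j => le_trans (le_max_left _ _) (Order.le_succ _)
  have hmunb : ∀ c, c < μ → ∃ j, c < m j := by
    intro c hc
    have hcο : c.ord < μ.ord := Cardinal.ord_lt_ord.2 hc
    rw [← hg.blsub_eq, Ordinal.lt_blsub_iff] at hcο
    obtain ⟨j0, hj0, hle⟩ := hcο
    set jj := (Ordinal.ToType.mk (o := μ.ord.cof.ord)) ⟨j0, hj0⟩ with hjj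
    refine ⟨jj, ?_⟩
    have h1 : c ≤ (g (tyin jj) (tyin_lt jj)).card := by
      rw [← Cardinal.card_ord c]
      apply Ordinal.card_le_card
      have : tyin jj = j0 := tyin_enum _ _ hj0
      convert hle using 2
    calc c ≤ _ := h1
      _ ≤ max ℵ₀ _ := le_max_right _ _
      _ < m jj := Order.lt_succ _
  have hsup : iSup (fun j => (σof (m j)).ord) < lam.ord := by
    apply Ordinal.iSup_lt_ord
    · rw [Cardinal.mk_toType, Cardinal.card_ord]
      exact hκρ
    · intro j
      exact Cardinal.ord_lt_ord.2 (hσ _ (hminf j) (hmμ j))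
  have hσslam : (iSup (fun j => (σof (m j)).ord)).card < lam := Cardinal.lt_ord.1 hsup
  set σs := (iSup (fun j => (σof (m j)).ord)).card with hσs
  have hσsbound : ∀ j, σof (m j) ≤ σs := by
    intro j
    rw [hσs, ← Cardinal.card_ord (σof (m j))]
    exact Ordinal.card_le_card (Ordinal.le_iSup (fun j => (σof (m j)).ord) j)
  obtain ⟨cT, hcT, hcTb⟩ := hW σs hσslam true
  obtain ⟨cF, hcF, hcFb⟩ := hW σs hσslam false
  obtain ⟨j, hj⟩ := hmunb (max cT cF) (max_lt hcT hcF)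
  by_cases hPm : P (m j)
  · have := hcTb (m j) (hminf j) (hmμ j) (hσsbound j) (by simp [hPm])
    exact absurd hj (not_lt.2 (this.trans (le_max_left _ _)))
  · have := hcFb (m j) (hminf j) (hmμ j) (hσsbound j) (by simp [hPm])
    exact absurd hj (not_lt.2 (this.trans (le_max_right _ _)))

lemma pack3_mod (ζ : Ordinal.{u}) (k : Ordinal.{u}) (hk : k < 3) : (3 * ζ + k) % 3 = k := by
  rw [Ordinal.mul_add_mod_self, Ordinal.mod_eq_of_lt hk]

lemma pack3_div (ζ : Ordinal.{u}) (k : Ordinal.{u}) (hk : k < 3) : (3 * ζ + k) / 3 = ζ := by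
  rw [Ordinal.mul_add_div _ (by norm_num) _, Ordinal.div_eq_zero_of_lt hk, add_zero]

lemma ord_pos_of_ne_zero {c : Cardinal.{u}} (hc : c ≠ 0) : (0 : Ordinal.{u}) < c.ord :=
  pos_iff_ne_zero.2 fun h0 => hc (Cardinal.ord_eq_zero.1 h0)

/-- Main construction : `cf μ ≤ 2 ^ θ` is impossible when `μ` is singular. -/
lemma main_contradiction {lam μ : Cardinal.{u}} (hlam : ℵ₀ ≤ lam) (hμ : ℵ₀ ≤ μ)
    (h : IsPosEntangled α μ lam) (hmin : ∀ μ' < μ, ¬ IsPosEntangled α μ' lam)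
    {x : α} (hx : Separative α μ x) (hcf : μ.ord.cof ≠ lam.ord.cof)
    {θ : Cardinal.{u}} (hθ : ℵ₀ ≤ θ) (hθl : θ < lam)
    (hκ2θ : μ.ord.cof ≤ 2 ^ θ) (hκμ : μ.ord.cof < μ) : False := by
  -- abbreviations
  have hκinf : ℵ₀ ≤ μ.ord.cof := Ordinal.aleph0_le_cof.2 (Cardinal.isSuccLimit_ord hμ)
  have hℵμ : ℵ₀ < μ := aleph0_lt_mu hμ hκμ
  have hltμ : ∀ c, c < lam → c < μ := fun c hc => lt_mu_of_lt_lam hμ h hx hc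
  -- failure packages
  set pk : Cardinal.{u} → Cardinal.{u} × (Ordinal.{u} → Ordinal.{u} → α) × Set Ordinal.{u} :=
    fun ν => if hν : ℵ₀ ≤ ν ∧ ν < μ then Classical.choose (exists_fail hmin hν.1 hν.2)
      else ⟨1, fun _ _ => x, ∅⟩ with hpk
  have pkspec : ∀ ν, ℵ₀ ≤ ν → ν < μ →
      (pk ν).1 < lam ∧ (pk ν).1 ≠ 0 ∧
      (∀ ε, ε < (pk ν).1.ord → ∀ i, i < ν.ord → ∀ j, j < ν.ord → i ≠ j →
        (pk ν).2.1 ε i ≠ (pk ν).2.1 ε j) ∧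
      ((pk ν).2.2 = ∅ ∨ (pk ν).2.2 = Set.Iio (pk ν).1.ord) ∧
      ¬ ∃ a, a < ν.ord ∧ ∃ b, b < ν.ord ∧ a < b ∧
        ∀ ε, ε < (pk ν).1.ord → ((pk ν).2.1 ε a < (pk ν).2.1 ε b ↔ ε ∈ (pk ν).2.2) := by
    intro ν h1 h2
    have : pk ν = Classical.choose (exists_fail hmin h1 h2) := by
      rw [hpk]; simp only [dif_pos (And.intro h1 h2)]
    rw [this]
    exact Classical.choose_spec (exists_fail hmin h1 h2)
  -- Lemma W
  obtain ⟨σs, hσslam, ty, hGood⟩ :=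
    lemma_W hμ hlam hcf hκμ (fun ν => (pk ν).1) (fun ν => (pk ν).2.2 = ∅)
      (fun ν h1 h2 => (pkspec ν h1 h2).1)
  have hσsμ : σs < μ := hltμ σs hσslam
  -- column cardinal
  set νc : Cardinal.{u} := max θ σs with hνc
  have hνcinf : ℵ₀ ≤ νc := le_trans hθ (le_max_left _ _)
  have hνclam : νc < lam := max_lt hθl hσslam
  have hθνc : θ.ord ≤ νc.ord := Cardinal.ord_le_ord.2 (le_max_left _ _)
  have hσsνc : σs.ord ≤ νc.ord := Cardinal.ord_le_ord.2 (le_max_right _ _)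
  -- the target pattern set
  set uu : Set Ordinal.{u} := if ty = true then ∅ else Set.Iio νc.ord with huu
  have huor : uu = ∅ ∨ uu = Set.Iio νc.ord := by
    by_cases hty : ty = true <;> simp [huu, hty]
  have humem : ∀ ε, ε < νc.ord → (ε ∈ uu ↔ ty = false) := by
    intro ε hε
    by_cases hty : ty = true <;> simp [huu, hty, hε]
  -- separative injections and codes
  obtain ⟨fL, hfL, hfLi⟩ := exists_inj_fun x hx.1
  obtain ⟨fR, hfR, hfRi⟩ := exists_inj_fun x hx.2
  have hfLx : ∀ i, i < μ.ord → fL i < x := fun i hi => hfL i hi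
  have hfRx : ∀ i, i < μ.ord → x < fR i := fun i hi => hfR i hi
  obtain ⟨code, codeSub, codeInj⟩ := exists_codes (κ := μ.ord.cof) (θ := θ) hκ2θ
  -- cofinal sequence in μ.ord
  obtain ⟨g, hg⟩ := Ordinal.exists_fundamental_sequence μ.ord
  set gg : Ordinal.{u} → Ordinal.{u} :=
    fun ι => if hι : ι < μ.ord.cof.ord then g ι hι else 0 with hgg
  have hgglt : ∀ ι, ι < μ.ord.cof.ord → gg ι < μ.ord := by
    intro ι hι; rw [hgg]; simp only [dif_pos hι]; exact hg.lt hι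
  have hggunb : ∀ i, i < μ.ord → ∃ ι, ι < μ.ord.cof.ord ∧ i ≤ gg ι := by
    intro i hi
    rw [← hg.blsub_eq, Ordinal.lt_blsub_iff] at hi
    obtain ⟨ι, hι, hle⟩ := hi
    exact ⟨ι, hι, by rw [hgg]; simp only [dif_pos hι]; exact hle⟩
  -- "next good cardinal" function
  set nxt : Cardinal.{u} → Cardinal.{u} :=
    fun c => if hc : c < μ then Classical.choose (hGood c hc) else ℵ₀ with hnxt
  have nxtspec : ∀ c, c < μ → ℵ₀ ≤ nxt c ∧ nxt c < μ ∧ (pk (nxt c)).1 ≤ σs ∧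
      ((pk (nxt c)).2.2 = ∅ ↔ ty = true) ∧ c < nxt c := by
    intro c hc
    have : nxt c = Classical.choose (hGood c hc) := by
      rw [hnxt]; simp only [dif_pos hc]
    rw [this]
    exact Classical.choose_spec (hGood c hc)
  -- the recursion
  set F : (ι : Ordinal.{u}) → ((ι' : Ordinal.{u}) → ι' < ι → Cardinal.{u}) → Cardinal.{u} :=
    fun ι rec => nxt (ℵ₀ + σs + ι.card + (gg ι).card +
      (Ordinal.bsup ι (fun ι' h => (rec ι' h).ord)).card) with hF
  set M : Ordinal.{u} → Cardinal.{u} := Ordinal.lt_wf.fix F with hM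
  set Q : Ordinal.{u} → Cardinal.{u} := fun ι => ℵ₀ + σs + ι.card + (gg ι).card +
      (Ordinal.bsup ι (fun ι' _ => (M ι').ord)).card with hQ
  have hMQ : ∀ ι, M ι = nxt (Q ι) := by
    intro ι
    rw [hM]
    exact Ordinal.lt_wf.fix_eq F ι
  -- invariants
  have Minv : ∀ ι, ι < μ.ord.cof.ord →
      Q ι < μ ∧ ℵ₀ ≤ M ι ∧ M ι < μ ∧ (pk (M ι)).1 ≤ σs ∧
        ((pk (M ι)).2.2 = ∅ ↔ ty = true) ∧ Q ι < M ι := by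
    intro ι
    induction ι using Ordinal.induction with
    | h ι IH =>
      intro hι
      have hbsup : Ordinal.bsup ι (fun ι' (_ : ι' < ι) => (M ι').ord) < μ.ord := by
        apply Ordinal.bsup_lt_ord
        · exact Cardinal.lt_ord.1 hι
        · intro ι' hι'
          exact Cardinal.ord_lt_ord.2 (IH ι' hι' (hι'.trans hι)).2.2.1
      have hQμ : Q ι < μ := by
        rw [hQ]
        have h1 : ι.card < μ := (Cardinal.lt_ord.1 hι).trans hκμ
        have h2 : (gg ι).card < μ := Cardinal.lt_ord.1 (hgglt ι hι)
        have h3 : (Ordinal.bsup ι (fun ι' _ => (M ι').ord)).card < μ := Cardinal.lt_ord.1 hbsup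
        exact Cardinal.add_lt_of_lt hμ (Cardinal.add_lt_of_lt hμ (Cardinal.add_lt_of_lt hμ
          (Cardinal.add_lt_of_lt hμ hℵμ hσsμ) h1) h2) h3
      obtain ⟨n1, n2, n3, n4, n5⟩ := nxtspec (Q ι) hQμ
      rw [← hMQ ι] at n1 n2 n3 n4 n5
      exact ⟨hQμ, n1, n2, n3, n4, n5⟩
  -- components of Q are ≤ Q, hence < M
  have hQcomp : ∀ ι, σs ≤ Q ι ∧ ι.card ≤ Q ι ∧ (gg ι).card ≤ Q ι ∧
      (Ordinal.bsup ι (fun ι' _ => (M ι').ord)).card ≤ Q ι := by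
    intro ι
    rw [hQ]
    refine ⟨?_, ?_, ?_, ?_⟩
    · exact le_trans (le_trans (le_trans (self_le_add_left σs ℵ₀) le_self_add) le_self_add)
        le_self_add
    · exact le_trans (le_trans (self_le_add_left ι.card (ℵ₀ + σs)) le_self_add) le_self_add
    · exact le_trans (self_le_add_left (gg ι).card (ℵ₀ + σs + ι.card)) le_self_add
    · exact self_le_add_left _ _
  have Mmono : ∀ ι ι', ι' < ι → ι < μ.ord.cof.ord → M ι' < M ι := by
    intro ι ι' hlt hι
    have h1 : (M ι').ord ≤ Ordinal.bsup ι (fun ι'' _ => (M ι'').ord) := Ordinal.le_bsup _ ι' hlt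
    have h2 : M ι' ≤ (Ordinal.bsup ι (fun ι'' _ => (M ι'').ord)).card := by
      rw [← Cardinal.card_ord (M ι')]
      exact Ordinal.card_le_card h1
    exact lt_of_le_of_lt (h2.trans (hQcomp ι).2.2.2) (Minv ι hι).2.2.2.2.2
  -- used values
  set U : Ordinal.{u} → Set α := fun ι =>
    {v | ∃ ι', ι' < ι ∧ ∃ ε, ε < (pk (M ι')).1.ord ∧ ∃ r, r < (M ι').ord ∧
      (pk (M ι')).2.1 ε r = v} with hU
  have hUlt : ∀ ι, ι < μ.ord.cof.ord → #(U ι) < M ι := by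
    intro ι hι
    set BS : Ordinal.{u} := Ordinal.bsup ι (fun ι' (_ : ι' < ι) => (M ι').ord) with hBS
    set FU : ι.ToType × σs.ord.ToType × BS.ToType → α :=
      fun p => (pk (M (tyin p.1))).2.1 (tyin p.2.1) (tyin p.2.2) with hFU
    have hsub : U ι ⊆ Set.range FU := by
      rintro v ⟨ι', hι', ε, hε, r, hr, hv⟩
      have hι'cof : ι' < μ.ord.cof.ord := hι'.trans hι
      have hεσs : ε < σs.ord :=
        hε.trans_le (Cardinal.ord_le_ord.2 (Minv ι' hι'cof).2.2.2.1)
      have hrBS : r < BS := hr.trans_le (Ordinal.le_bsup _ ι' hι')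
      refine ⟨⟨(Ordinal.ToType.mk (o := ι)) ⟨ι', hι'⟩,
        (Ordinal.ToType.mk (o := σs.ord)) ⟨ε, hεσs⟩,
        (Ordinal.ToType.mk (o := BS)) ⟨r, hrBS⟩⟩, ?_⟩
      rw [hFU]
      simp only
      rw [tyin_enum, tyin_enum, tyin_enum]
      exact hv
    have h1 : #(U ι) ≤ ι.card * (σs * BS.card) := by
      calc #(U ι) ≤ #(Set.range FU) := Cardinal.mk_le_mk_of_subset hsub
        _ ≤ #(ι.ToType × σs.ord.ToType × BS.ToType) := Cardinal.mk_range_le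
        _ = ι.card * (σs * BS.card) := by
            simp [Cardinal.mk_prod, Cardinal.mk_toType]
    have hMι := Minv ι hι
    have hcardι : ι.card < M ι := (hQcomp ι).2.1.trans_lt hMι.2.2.2.2.2
    have hσsM : σs < M ι := (hQcomp ι).1.trans_lt hMι.2.2.2.2.2
    have hBSM : BS.card < M ι := (hQcomp ι).2.2.2.trans_lt hMι.2.2.2.2.2
    exact h1.trans_lt (Cardinal.mul_lt_of_lt hMι.2.1 hcardι
      (Cardinal.mul_lt_of_lt hMι.2.1 hσsM hBSM))
  -- clean rows
  set C : Ordinal.{u} → Set Ordinal.{u} := fun ι =>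
    {r | r < (M ι).ord ∧ ∀ ε, ε < (pk (M ι)).1.ord → (pk (M ι)).2.1 ε r ∉ U ι} with hC
  have hClarge : ∀ ι, ι < μ.ord.cof.ord → Cardinal.lift.{u+1} (M ι) ≤ #(C ι) := by
    intro ι hι
    by_contra hlt
    push_neg at hlt
    have hMι := Minv ι hι
    set bad : Set Ordinal.{u} :=
      {r | r < (M ι).ord ∧ ∃ ε, ε < (pk (M ι)).1.ord ∧ (pk (M ι)).2.1 ε r ∈ U ι} with hbad
    have hunion : Set.Iio (M ι).ord ⊆ C ι ∪ bad := by
      intro r hr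
      by_cases hrc : ∀ ε, ε < (pk (M ι)).1.ord → (pk (M ι)).2.1 ε r ∉ U ι
      · exact Or.inl ⟨hr, hrc⟩
      · push_neg at hrc
        exact Or.inr ⟨hr, hrc⟩
    -- bad is small
    have hbadlt : #bad < Cardinal.lift.{u+1} (M ι) := by
      have hinj : ∃ φ : ↥bad → ↥(Set.Iio (pk (M ι)).1.ord) × ULift.{u+1} ↥(U ι),
          Function.Injective φ := by
        have sel : ∀ r : ↥bad, ∃ ε, ε < (pk (M ι)).1.ord ∧ (pk (M ι)).2.1 ε r.1 ∈ U ι :=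
          fun r => r.2.2
        choose εf hεf hmem using sel
        refine ⟨fun r => ⟨⟨εf r, hεf r⟩, ULift.up ⟨(pk (M ι)).2.1 (εf r) r.1, hmem r⟩⟩, ?_⟩
        intro r r' hEq
        have h1 : εf r = εf r' := congrArg (Subtype.val ∘ Prod.fst) hEq
        have h2 : (pk (M ι)).2.1 (εf r) r.1 = (pk (M ι)).2.1 (εf r') r'.1 := by
          have := congrArg (fun z => (Prod.snd z).down.1) hEq
          exact this
        rw [← h1] at h2
        by_contra hne
        have hrne : r.1 ≠ r'.1 := fun hv => hne (Subtype.ext hv)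
        exact (pkspec (M ι) hMι.2.1 hMι.2.2.1).2.2.1 (εf r) (hεf r) r.1 r.2.1 r'.1 r'.2.1
          hrne h2
      obtain ⟨φ, hφ⟩ := hinj
      have hσofM : (pk (M ι)).1 < M ι := hMι.2.2.2.1.trans_lt ((hQcomp ι).1.trans_lt
        hMι.2.2.2.2.2)
      calc #bad ≤ #(↥(Set.Iio (pk (M ι)).1.ord) × ULift.{u+1} ↥(U ι)) :=
            Cardinal.mk_le_of_injective hφ
        _ = Cardinal.lift.{u+1} ((pk (M ι)).1 * #(U ι)) := by
            simp [Cardinal.mk_prod, Ordinal.mk_Iio_ordinal, Cardinal.mk_uLift,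
              Cardinal.card_ord, Cardinal.lift_mul]
        _ < Cardinal.lift.{u+1} (M ι) := by
            exact Cardinal.lift_lt.2 (Cardinal.mul_lt_of_lt hMι.2.1 hσofM (hUlt ι hι))
    have hbig : Cardinal.lift.{u+1} (M ι) ≤ #(C ι) + #bad := by
      calc Cardinal.lift.{u+1} (M ι) = #(Set.Iio (M ι).ord) := by
            rw [Ordinal.mk_Iio_ordinal, Cardinal.card_ord]
        _ ≤ #(↥(C ι ∪ bad)) := Cardinal.mk_le_mk_of_subset hunion
        _ ≤ #(C ι) + #bad := Cardinal.mk_union_le _ _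
    have hsmall : #(C ι) + #bad < Cardinal.lift.{u+1} (M ι) := by
      have hainf : ℵ₀ ≤ Cardinal.lift.{u+1} (M ι) := by
        rw [← Cardinal.lift_aleph0.{u+1, u}]
        exact Cardinal.lift_le.2 hMι.2.1
      exact Cardinal.add_lt_of_lt hainf hlt hbadlt
    exact absurd hbig (not_le.2 hsmall)
  -- enumeration of clean rows
  set Cp : Ordinal.{u} → Set Ordinal.{u} := fun ι => C ι ∪ Set.Ici (M ι).ord with hCp
  have hCpunb : ∀ ι, ¬ BddAbove (Cp ι) := by
    intro ι ⟨b, hb⟩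
    have h1 : (M ι).ord + b + 1 ∈ Cp ι := by
      apply Set.mem_union_right
      have : (M ι).ord ≤ (M ι).ord + b + 1 :=
        le_trans le_self_add le_self_add
      exact this
    have h2 := hb h1
    have h3 : b < (M ι).ord + b + 1 := by
      apply lt_of_le_of_lt (le_add_self : b ≤ (M ι).ord + b)
      rw [Ordinal.add_one_eq_succ]
      exact Order.lt_succ _
    exact absurd h2 (not_le.2 h3)
  set eC : Ordinal.{u} → Ordinal.{u} → Ordinal.{u} := fun ι r => Ordinal.enumOrd (Cp ι) r
    with heC
  have heCmono : ∀ ι, StrictMono (eC ι) := fun ι => Ordinal.enumOrd_strictMono (hCpunb ι)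
  have heCC : ∀ ι, ι < μ.ord.cof.ord → ∀ r, r < (M ι).ord → eC ι r ∈ C ι := by
    intro ι hι
    by_contra hbadr
    push_neg at hbadr
    obtain ⟨r1, hr1, hr1nc⟩ := hbadr
    set R : Set Ordinal.{u} := {r | r < (M ι).ord ∧ eC ι r ∉ C ι} with hR
    have hRne : R.Nonempty := ⟨r1, hr1, hr1nc⟩
    set r0 : Ordinal.{u} := sInf R with hr0
    have hr0R : r0 ∈ R := csInf_mem hRne
    have hr0M : eC ι r0 ≥ (M ι).ord := by
      have h1 : eC ι r0 ∈ Cp ι := Ordinal.enumOrd_mem (hCpunb ι) r0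
      rcases h1 with h1 | h1
      · exact absurd h1 hr0R.2
      · exact h1
    -- every element of C ι is enumerated before r0
    have hφ : ∃ φ : ↥(C ι) → ↥(Set.Iio r0), Function.Injective φ := by
      have sel : ∀ y : ↥(C ι), ∃ a, Ordinal.enumOrd (Cp ι) a = y.1 :=
        fun y => Ordinal.enumOrd_surjective (hCpunb ι) (Set.mem_union_left _ y.2)
      choose af haf using sel
      have haflt : ∀ y, af y < r0 := by
        intro y
        have h1 : Ordinal.enumOrd (Cp ι) (af y) < Ordinal.enumOrd (Cp ι) r0 := by
          rw [haf y]
          exact lt_of_lt_of_le y.2.1 hr0M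
        exact (Ordinal.enumOrd_strictMono (hCpunb ι)).lt_iff_lt.1 h1
      refine ⟨fun y => ⟨af y, haflt y⟩, ?_⟩
      intro y y' hEq
      have h1 : af y = af y' := congrArg Subtype.val hEq
      apply Subtype.ext
      rw [← haf y, ← haf y', h1]
    obtain ⟨φ, hφinj⟩ := hφ
    have h1 : Cardinal.lift.{u+1} (M ι) ≤ #(Set.Iio r0) :=
      le_trans (hClarge ι hι) (Cardinal.mk_le_of_injective hφinj)
    rw [Ordinal.mk_Iio_ordinal] at h1
    have h2 : (M ι) ≤ r0.card := Cardinal.lift_le.1 h1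
    have h3 : r0.card < M ι := Cardinal.lt_ord.1 hr0R.1
    exact absurd h2 h3.not_ge
  have heCin : ∀ ι, ι < μ.ord.cof.ord → ∀ r, r < (M ι).ord → eC ι r < (M ι).ord :=
    fun ι hι r hr => (heCC ι hι r hr).1
  have heCnotU : ∀ ι, ι < μ.ord.cof.ord → ∀ r, r < (M ι).ord →
      ∀ ε, ε < (pk (M ι)).1.ord → (pk (M ι)).2.1 ε (eC ι r) ∉ U ι :=
    fun ι hι r hr => (heCC ι hι r hr).2
  -- blocks
  set blockOf : Ordinal.{u} → Ordinal.{u} := fun i => sInf {ι | i < (M ι).ord} with hblockOf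
  have hbne : ∀ i, i < μ.ord → ∃ ι, ι < μ.ord.cof.ord ∧ i < (M ι).ord := by
    intro i hi
    obtain ⟨ι, hι, hle⟩ := hggunb i hi
    refine ⟨ι, hι, lt_of_le_of_lt hle ?_⟩
    rw [Cardinal.lt_ord]
    exact (hQcomp ι).2.2.1.trans_lt (Minv ι hι).2.2.2.2.2
  have hbo_mem : ∀ i, i < μ.ord → i < (M (blockOf i)).ord := by
    intro i hi
    obtain ⟨ι, hι, hlt⟩ := hbne i hi
    have hne : ({ι' | i < (M ι').ord} : Set Ordinal.{u}).Nonempty := ⟨ι, hlt⟩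
    exact csInf_mem hne
  have hbo_cof : ∀ i, i < μ.ord → blockOf i < μ.ord.cof.ord := by
    intro i hi
    obtain ⟨ι, hι, hlt⟩ := hbne i hi
    exact lt_of_le_of_lt (csInf_le' (show ι ∈ {ι' | i < (M ι').ord} from hlt)) hι
  have hbo_mono : ∀ i j, i ≤ j → j < μ.ord → blockOf i ≤ blockOf j := by
    intro i j hij hj
    apply csInf_le'
    show i < (M (blockOf j)).ord
    exact lt_of_le_of_lt hij (hbo_mem j hj)
  -- the array
  set T : Ordinal.{u} → Ordinal.{u} → α := fun ε i =>
    if hi : i < μ.ord then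
      (if ε % 3 = 0 then (if ε / 3 ∈ code (blockOf i) then fR i else fL i)
       else if ε % 3 = 1 then (if ε / 3 ∈ code (blockOf i) then fL i else fR i)
       else (pk (M (blockOf i))).2.1
         (if ε / 3 < (pk (M (blockOf i))).1.ord then ε / 3 else 0) (eC (blockOf i) i))
    else x with hT
  have hσ0pos : ∀ ι, ι < μ.ord.cof.ord → (0 : Ordinal.{u}) < (pk (M ι)).1.ord :=
    fun ι hι => ord_pos_of_ne_zero (pkspec (M ι) (Minv ι hι).2.1 (Minv ι hι).2.2.1).2.1
  have hξb : ∀ ε : Ordinal.{u}, ∀ ι, ι < μ.ord.cof.ord →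
      (if ε / 3 < (pk (M ι)).1.ord then ε / 3 else 0) < (pk (M ι)).1.ord := by
    intro ε ι hι
    by_cases hcase : ε / 3 < (pk (M ι)).1.ord
    · rw [if_pos hcase]; exact hcase
    · rw [if_neg hcase]; exact hσ0pos ι hι
  -- value computations
  have hv0 : ∀ i, i < μ.ord → ∀ ζ : Ordinal.{u},
      T (3 * ζ + 0) i = if ζ ∈ code (blockOf i) then fR i else fL i := by
    intro i hi ζ
    have m0 : (3 * ζ + 0) % 3 = 0 := pack3_mod ζ 0 (by norm_num)
    have d0 : (3 * ζ + 0) / 3 = ζ := pack3_div ζ 0 (by norm_num)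
    simp only [hT, m0, d0, dif_pos hi]
    simp
  have hv1 : ∀ i, i < μ.ord → ∀ ζ : Ordinal.{u},
      T (3 * ζ + 1) i = if ζ ∈ code (blockOf i) then fL i else fR i := by
    intro i hi ζ
    have m1 : (3 * ζ + 1) % 3 = 1 := pack3_mod ζ 1 (by norm_num)
    have d1 : (3 * ζ + 1) / 3 = ζ := pack3_div ζ 1 (by norm_num)
    have h10 : (1 : Ordinal.{u}) ≠ 0 := one_ne_zero
    simp only [hT, m1, d1, dif_pos hi]
    simp [h10]
  have hv2 : ∀ i, i < μ.ord → ∀ ξ : Ordinal.{u}, ξ < (pk (M (blockOf i))).1.ord →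
      T (3 * ξ + 2) i = (pk (M (blockOf i))).2.1 ξ (eC (blockOf i) i) := by
    intro i hi ξ hξ
    have m2 : (3 * ξ + 2) % 3 = 2 := pack3_mod ξ 2 (by exact_mod_cast (show (2:ℕ) < 3 by norm_num))
    have d2 : (3 * ξ + 2) / 3 = ξ := pack3_div ξ 2 (by exact_mod_cast (show (2:ℕ) < 3 by norm_num))
    have h20 : (2 : Ordinal.{u}) ≠ 0 := by norm_num
    have h21 : (2 : Ordinal.{u}) ≠ 1 := by norm_num
    simp only [hT, m2, d2, dif_pos hi, if_neg h20, if_neg h21, if_pos hξ]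
  -- injectivity of the columns
  have hTinj : ∀ ε, ε < νc.ord → ∀ i, i < μ.ord → ∀ j, j < μ.ord → i ≠ j →
      T ε i ≠ T ε j := by
    intro ε hε i hi j hj hij
    simp only [hT, dif_pos hi, dif_pos hj]
    by_cases hm0 : ε % 3 = 0
    · rw [if_pos hm0, if_pos hm0]
      by_cases h1 : ε / 3 ∈ code (blockOf i) <;> by_cases h2 : ε / 3 ∈ code (blockOf j)
      · rw [if_pos h1, if_pos h2]; exact hfRi i hi j hj hij
      · rw [if_pos h1, if_neg h2]; exact ne_of_gt ((hfLx j hj).trans (hfRx i hi))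
      · rw [if_neg h1, if_pos h2]; exact ne_of_lt ((hfLx i hi).trans (hfRx j hj))
      · rw [if_neg h1, if_neg h2]; exact hfLi i hi j hj hij
    · by_cases hm1 : ε % 3 = 1
      · rw [if_neg hm0, if_pos hm1, if_neg hm0, if_pos hm1]
        by_cases h1 : ε / 3 ∈ code (blockOf i) <;> by_cases h2 : ε / 3 ∈ code (blockOf j)
        · rw [if_pos h1, if_pos h2]; exact hfLi i hi j hj hij
        · rw [if_pos h1, if_neg h2]; exact ne_of_lt ((hfLx i hi).trans (hfRx j hj))
        · rw [if_neg h1, if_pos h2]; exact ne_of_gt ((hfLx j hj).trans (hfRx i hi))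
        · rw [if_neg h1, if_neg h2]; exact hfRi i hi j hj hij
      · rw [if_neg hm0, if_neg hm1, if_neg hm0, if_neg hm1]
        have hbi := hbo_cof i hi
        have hbj := hbo_cof j hj
        have hmemi := hbo_mem i hi
        have hmemj := hbo_mem j hj
        rcases lt_trichotomy (blockOf i) (blockOf j) with hc | hc | hc
        · have hmemU : (pk (M (blockOf i))).2.1
              (if ε / 3 < (pk (M (blockOf i))).1.ord then ε / 3 else 0)
              (eC (blockOf i) i) ∈ U (blockOf j) :=
            ⟨blockOf i, hc, _, hξb ε (blockOf i) hbi, eC (blockOf i) i,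
              heCin (blockOf i) hbi i hmemi, rfl⟩
          intro hEq
          exact (heCnotU (blockOf j) hbj j hmemj _ (hξb ε (blockOf j) hbj)) (hEq ▸ hmemU)
        · rw [hc]
          have hmemi' : i < (M (blockOf j)).ord := hc ▸ hmemi
          apply (pkspec (M (blockOf j)) (Minv _ hbj).2.1 (Minv _ hbj).2.2.1).2.2.1 _
            (hξb ε (blockOf j) hbj) _ (heCin (blockOf j) hbj i hmemi') _
            (heCin (blockOf j) hbj j hmemj)
          exact fun hEq => hij ((heCmono (blockOf j)).injective hEq)
        · have hmemU : (pk (M (blockOf j))).2.1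
              (if ε / 3 < (pk (M (blockOf j))).1.ord then ε / 3 else 0)
              (eC (blockOf j) j) ∈ U (blockOf i) :=
            ⟨blockOf j, hc, _, hξb ε (blockOf j) hbj, eC (blockOf j) j,
              heCin (blockOf j) hbj j hmemj, rfl⟩
          intro hEq
          exact (heCnotU (blockOf i) hbi i hmemi _ (hξb ε (blockOf i) hbi)) (hEq.symm ▸ hmemU)
  -- apply entangledness
  obtain ⟨a, ha, b, hb, hab, hp⟩ := h νc hνclam T hTinj uu huor
  have hbo_ab : blockOf a ≤ blockOf b := hbo_mono a b hab.le hb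
  rcases eq_or_lt_of_le hbo_ab with hceq | hclt
  · -- same block : contradict the failure witness
    have hbi := hbo_cof a ha
    have hmema : a < (M (blockOf a)).ord := hbo_mem a ha
    have hmemb : b < (M (blockOf a)).ord := by rw [hceq]; exact hbo_mem b hb
    apply (pkspec (M (blockOf a)) (Minv _ hbi).2.1 (Minv _ hbi).2.2.1).2.2.2.2
    refine ⟨eC (blockOf a) a, heCin _ hbi a hmema, eC (blockOf a) b, heCin _ hbi b hmemb,
      (heCmono (blockOf a)) hab, fun ξ hξ => ?_⟩
    have hξσs : ξ < νc.ord :=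
      lt_of_lt_of_le hξ (le_trans (Cardinal.ord_le_ord.2 (Minv _ hbi).2.2.2.1) hσsνc)
    have hbound : 3 * ξ + 2 < νc.ord := by
      have h3ω : (3 : Ordinal.{u}) < Ordinal.omega0 := by exact_mod_cast Ordinal.nat_lt_omega0 3
      have h2ω : (2 : Ordinal.{u}) < Ordinal.omega0 := by exact_mod_cast Ordinal.nat_lt_omega0 2
      exact pack_lt_ord hνcinf hξσs 3 2 h3ω h2ω
    have hva : T (3 * ξ + 2) a = (pk (M (blockOf a))).2.1 ξ (eC (blockOf a) a) :=
      hv2 a ha ξ hξ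
    have hvb : T (3 * ξ + 2) b = (pk (M (blockOf a))).2.1 ξ (eC (blockOf a) b) := by
      have := hv2 b hb ξ (by rw [← hceq]; exact hξ)
      rw [← hceq] at this
      exact this
    have hpε := hp _ hbound
    rw [hva, hvb] at hpε
    have hmem := humem _ hbound
    by_cases hty : ty = true
    · have huempty : (pk (M (blockOf a))).2.2 = ∅ := (Minv _ hbi).2.2.2.2.1.2 hty
      rw [huempty]
      have : ¬ ((3 : Ordinal.{u}) * ξ + 2 ∈ uu) := by
        rw [hmem]; simp [hty]
      rw [hpε]
      exact iff_of_false this (by simp)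
    · have hune : (pk (M (blockOf a))).2.2 ≠ ∅ :=
        fun hEq => hty ((Minv _ hbi).2.2.2.2.1.1 hEq)
      have huIio : (pk (M (blockOf a))).2.2 = Set.Iio (pk (M (blockOf a))).1.ord := by
        rcases (pkspec (M (blockOf a)) (Minv _ hbi).2.1 (Minv _ hbi).2.2.1).2.2.2.1 with
          hcase | hcase
        · exact absurd hcase hune
        · exact hcase
      rw [huIio]
      have hm : (3 : Ordinal.{u}) * ξ + 2 ∈ uu := by
        rw [hmem]
        simp [Bool.not_eq_true] at hty ⊢
        exact hty
      exact iff_of_true (hpε.2 hm) hξ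
  · -- different blocks : contradiction via the codes
    have hbi := hbo_cof a ha
    have hbj := hbo_cof b hb
    have hne : code (blockOf a) ≠ code (blockOf b) :=
      fun hEq => absurd (codeInj _ hbi _ hbj hEq) hclt.ne
    have hζex : ∃ ζ, ¬ (ζ ∈ code (blockOf a) ↔ ζ ∈ code (blockOf b)) := by
      by_contra hno; push_neg at hno
      exact hne (Set.ext fun ζ => hno ζ)
    obtain ⟨ζ, hζne⟩ := hζex
    have hζθ : ζ < θ.ord := by
      rcases Classical.em (ζ ∈ code (blockOf a)) with hm | hm
      · exact codeSub _ hm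
      · rcases Classical.em (ζ ∈ code (blockOf b)) with hm' | hm'
        · exact codeSub _ hm'
        · exact absurd (iff_of_false hm hm') hζne
    have hζνc : ζ < νc.ord := lt_of_lt_of_le hζθ hθνc
    have h3ω : (3 : Ordinal.{u}) < Ordinal.omega0 := by exact_mod_cast Ordinal.nat_lt_omega0 3
    have h1ω : (1 : Ordinal.{u}) < Ordinal.omega0 := by exact_mod_cast Ordinal.nat_lt_omega0 1
    have h0ω : (0 : Ordinal.{u}) < Ordinal.omega0 := by exact_mod_cast Ordinal.nat_lt_omega0 0
    have hε0 : 3 * ζ + 0 < νc.ord := pack_lt_ord hνcinf hζνc 3 0 h3ω h0ω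
    have hε1 : 3 * ζ + 1 < νc.ord := pack_lt_ord hνcinf hζνc 3 1 h3ω h1ω
    have hp0 := hp _ hε0
    have hp1 := hp _ hε1
    have hmem0 := humem _ hε0
    have hmem1 := humem _ hε1
    rcases Classical.em (ζ ∈ code (blockOf a)) with hma | hma
    · have hmb : ζ ∉ code (blockOf b) := fun hmb => hζne (iff_of_true hma hmb)
      rw [hv0 a ha ζ, hv0 b hb ζ, if_pos hma, if_neg hmb] at hp0
      rw [hv1 a ha ζ, hv1 b hb ζ, if_pos hma, if_neg hmb] at hp1
      have hLHS0 : ¬ (fR a < fL b) := not_lt_of_gt ((hfLx b hb).trans (hfRx a ha))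
      have hLHS1 : fL a < fR b := (hfLx a ha).trans (hfRx b hb)
      have hty1 : ty = false := by
        rw [← hmem1]; exact hp1.1 hLHS1
      have hty0 : ¬ (ty = false) := by
        rw [← hmem0]
        intro hmem
        exact hLHS0 (hp0.2 hmem)
      exact hty0 hty1
    · have hmb : ζ ∈ code (blockOf b) := by
        rcases Classical.em (ζ ∈ code (blockOf b)) with hh | hh
        · exact hh
        · exact absurd (iff_of_false hma hh) hζne
      rw [hv0 a ha ζ, hv0 b hb ζ, if_neg hma, if_pos hmb] at hp0
      rw [hv1 a ha ζ, hv1 b hb ζ, if_neg hma, if_pos hmb] at hp1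
      have hLHS0 : fL a < fR b := (hfLx a ha).trans (hfRx b hb)
      have hLHS1 : ¬ (fR a < fL b) := not_lt_of_gt ((hfLx b hb).trans (hfRx a ha))
      have hty0 : ty = false := by
        rw [← hmem0]; exact hp0.1 hLHS0
      have hty1 : ¬ (ty = false) := by
        rw [← hmem1]
        intro hmem
        exact hLHS1 (hp1.2 hmem)
      exact hty1 hty0





end PosSep

/-- Corollary 3.6: if `I` is `(μ,λ)`-positively entangled with minimal `μ`,
has a `μ`-separative point, and `cf μ ≠ cf λ`, then `2^θ < cf μ` for all
infinite `θ < λ` and `λ < cf μ`. -/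
theorem pos_sep_two_pow_lt_cof (α : Type u) [LinearOrder α] (lam μ : Cardinal.{u})
    (hlam : ℵ₀ ≤ lam) (hμ : ℵ₀ ≤ μ)
    (h : IsPosEntangled α μ lam)
    (hmin : ∀ μ' < μ, ¬ IsPosEntangled α μ' lam)
    (x : α) (hx : Separative α μ x)
    (hcf : μ.ord.cof ≠ lam.ord.cof) :
    (∀ θ : Cardinal.{u}, ℵ₀ ≤ θ → θ < lam → (2 : Cardinal.{u}) ^ θ < μ.ord.cof) ∧
      lam < μ.ord.cof := by
  have partA : ∀ θ : Cardinal.{u}, ℵ₀ ≤ θ → θ < lam →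
      (2 : Cardinal.{u}) ^ θ < μ.ord.cof := by
    intro θ hθ hθl
    by_contra hge
    push_neg at hge
    have h2θμ : (2 : Cardinal.{u}) ^ θ < μ := PosSep.two_pow_lt hμ h hx hθ hθl
    rcases lt_or_eq_of_le (Ordinal.cof_ord_le μ) with hκμ | hκμ
    · exact PosSep.main_contradiction hlam hμ h hmin hx hcf hθ hθl hge hκμ
    · rw [hκμ] at hge
      exact absurd h2θμ (not_lt.2 hge)
  refine ⟨partA, ?_⟩
  have hκinf : ℵ₀ ≤ μ.ord.cof := Ordinal.aleph0_le_cof.2 (Cardinal.isSuccLimit_ord hμ)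
  have hlk : lam ≤ μ.ord.cof := by
    by_contra hlt
    push_neg at hlt
    exact lt_asymm (Cardinal.cantor _) (partA μ.ord.cof hκinf hlt)
  rcases lt_or_eq_of_le hlk with h1 | h1
  · exact h1
  · exfalso
    apply hcf
    rw [h1]
    exact (Ordinal.cof_cof μ.ord).symm
end

section
/- Let μ be a singular cardinal, let ⟨μ_α : α < cf μ⟩ be a strictly increasing sequence of cardinals converging to μ, and let s_μ be the linear order on ⋃_{α < cf μ} {α} × μ_α defined by (α,β) < (α₁,β₁) iff α < α₁, or α = α₁ and β > β₁. Then for every infinite cardinal θ, s_μ is (μ,θ⁺)-positively entangled if and only if θ < cf μ and (cf μ)^θ < μ. -/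
universe u v w

open Cardinal Set Order

/-- The linear order `s_μ`: pairs `(a, b)` with `a < cf μ` and `b < μ_a`,
ordered lexicographically in the first coordinate and reverse-lexicographically
in the second, i.e. `(a,b) < (a₁,b₁)` iff `a < a₁` or (`a = a₁` and `b > b₁`). -/
def SMu (c : Cardinal.{u}) (ms : Ordinal.{u} → Cardinal.{u}) : Type (u + 1) :=
  {p : Ordinal.{u} ×ₗ (Ordinal.{u})ᵒᵈ //
    (ofLex p).1 < c.ord ∧ OrderDual.ofDual (ofLex p).2 < (ms (ofLex p).1).ord}

noncomputable instance (c : Cardinal.{u}) (ms : Ordinal.{u} → Cardinal.{u}) :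
    LinearOrder (SMu c ms) := by
  unfold SMu; infer_instance

section SMuAux

variable {c : Cardinal.{u}} {ms : Ordinal.{u} → Cardinal.{u}}

/-- Constructor for `SMu`. -/
def smk (c : Cardinal.{u}) (ms : Ordinal.{u} → Cardinal.{u}) (a r : Ordinal.{u})
    (h1 : a < c.ord) (h2 : r < (ms a).ord) : SMu c ms :=
  ⟨toLex (a, OrderDual.toDual r), ⟨h1, h2⟩⟩

/-- The column of an element of `SMu`. -/
def colOf (x : SMu c ms) : Ordinal.{u} := (ofLex x.1).1

/-- The row of an element of `SMu`. -/
def rowOf (x : SMu c ms) : Ordinal.{u} := OrderDual.ofDual (ofLex x.1).2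

theorem colOf_smk (a r : Ordinal.{u}) (h1 h2) : colOf (smk c ms a r h1 h2) = a := rfl

theorem rowOf_smk (a r : Ordinal.{u}) (h1 h2) : rowOf (smk c ms a r h1 h2) = r := rfl

theorem colOf_lt (x : SMu c ms) : colOf x < c.ord := x.2.1

theorem rowOf_lt (x : SMu c ms) : rowOf x < (ms (colOf x)).ord := x.2.2

theorem smu_ext {x y : SMu c ms} (h1 : colOf x = colOf y) (h2 : rowOf x = rowOf y) :
    x = y := by
  apply Subtype.ext
  have : ofLex x.1 = ofLex y.1 := Prod.ext h1 (OrderDual.ofDual_inj.1 h2)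
  exact congrArg toLex this

theorem smu_lt_iff (x y : SMu c ms) :
    x < y ↔ colOf x < colOf y ∨ (colOf x = colOf y ∧ rowOf y < rowOf x) := by
  have h0 : x < y ↔ x.1 < y.1 := Iff.rfl
  rw [h0]
  have h1 : x.1 < y.1 ↔ (ofLex x.1).1 < (ofLex y.1).1 ∨
      ((ofLex x.1).1 = (ofLex y.1).1 ∧ (ofLex x.1).2 < (ofLex y.1).2) :=
    Prod.Lex.lt_iff
  rw [h1]
  constructor
  · rintro (h | ⟨h, h'⟩)
    · exact Or.inl h
    · exact Or.inr ⟨h, h'⟩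
  · rintro (h | ⟨h, h'⟩)
    · exact Or.inl h
    · exact Or.inr ⟨h, h'⟩

end SMuAux

theorem exists_monotone_pair (θ : Cardinal.{u}) (hθ : ℵ₀ ≤ θ)
    (S : Set Ordinal.{u}) (hS : Cardinal.lift.{u+1} (Order.succ (2 ^ θ)) ≤ #S)
    (F : Ordinal.{u} → Ordinal.{u} → Ordinal.{u}) :
    ∃ i ∈ S, ∃ j ∈ S, i < j ∧ ∀ ε, ε < θ.ord → F i ε ≤ F j ε := by
  classical
  by_contra hcon
  push_neg at hcon
  have key : ∀ i j, i ∈ S → j ∈ S → i < j → ∃ ε, ε < θ.ord ∧ F j ε < F i ε := by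
    intro i j hi hj hij
    obtain ⟨ε, hε, hF⟩ := hcon i hi j hj hij
    exact ⟨ε, hε, hF⟩
  set col : Ordinal.{u} → Ordinal.{u} → Ordinal.{u} := fun i j =>
    if h' : i ∈ S ∧ j ∈ S ∧ i < j then (key i j h'.1 h'.2.1 h'.2.2).choose else 0 with hcol
  have colP : ∀ i j, i ∈ S → j ∈ S → i < j →
      col i j < θ.ord ∧ F j (col i j) < F i (col i j) := by
    intro i j hi hj hij
    have h' : i ∈ S ∧ j ∈ S ∧ i < j := ⟨hi, hj, hij⟩
    simp only [hcol, dif_pos h']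
    exact (key i j h'.1 h'.2.1 h'.2.2).choose_spec
  -- the branch function
  set br : Ordinal.{u} → Ordinal.{u} → Ordinal.{u} := fun x =>
    WellFounded.fix Ordinal.lt_wf (fun ξ IH =>
      sInf {y | y ∈ S ∧ ∀ η, ∀ hη : η < ξ, IH η hη < y ∧ col (IH η hη) y = col (IH η hη) x})
    with hbr
  set G : Ordinal.{u} → Ordinal.{u} → Set Ordinal.{u} := fun x ξ =>
    {y | y ∈ S ∧ ∀ η, η < ξ → br x η < y ∧ col (br x η) y = col (br x η) x} with hG
  have brEq : ∀ x ξ, br x ξ = sInf (G x ξ) := by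
    intro x ξ
    show WellFounded.fix Ordinal.lt_wf _ ξ = _
    rw [WellFounded.fix_eq]
  have L1 : ∀ x, x ∈ S → ∀ ξ, (∀ η, η < ξ → br x η ≠ x) → x ∈ G x ξ := by
    intro x hx ξ
    induction ξ using Ordinal.induction with
    | h ξ IH =>
      intro hne
      refine ⟨hx, fun η hη => ?_⟩
      have hxG : x ∈ G x η := IH η hη fun η' hη' => hne η' (hη'.trans hη)
      have hle : br x η ≤ x := by rw [brEq]; exact csInf_le' hxG
      exact ⟨lt_of_le_of_ne hle (hne η hη), rfl⟩
  set Λ : Ordinal.{u} := (Order.succ θ).ord with hΛdef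
  have hΛcard : Λ.card = Order.succ θ := card_ord _
  by_cases hall : ∀ x ∈ S, ∃ ξ, ξ < Λ ∧ br x ξ = x
  · -- every element is reached: counting contradiction
    set ξof : Ordinal.{u} → Ordinal.{u} := fun x => sInf {ξ | ξ < Λ ∧ br x ξ = x} with hξof
    have hξ : ∀ x ∈ S, ξof x < Λ ∧ br x (ξof x) = x := by
      intro x hx
      obtain ⟨ξ, h1, h2⟩ := hall x hx
      exact csInf_mem (s := {ξ | ξ < Λ ∧ br x ξ = x}) ⟨ξ, h1, h2⟩
    have hξmin : ∀ x ∈ S, ∀ η, η < ξof x → br x η ≠ x := by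
      intro x hx η hη hEq
      have : ξof x ≤ η := csInf_le' ⟨hη.trans (hξ x hx).1, hEq⟩
      exact absurd hη this.not_gt
    have hfacts : ∀ x, x ∈ S → ∀ η, η < ξof x → br x η ∈ S ∧ br x η < x := by
      intro x hx η hη
      have hxG : x ∈ G x η := L1 x hx η fun η' hη' => hξmin x hx η' (hη'.trans hη)
      have hbG : br x η ∈ G x η := by rw [brEq]; exact csInf_mem ⟨x, hxG⟩
      have hle : br x η ≤ x := by rw [brEq]; exact csInf_le' hxG
      exact ⟨hbG.1, lt_of_le_of_ne hle (hξmin x hx η hη)⟩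
    -- injective coding functions
    have hembN : ∀ ξ, ξ < Λ → ∃ f : Ordinal.{u} → Ordinal.{u},
        (∀ η, η < ξ → f η < θ.ord) ∧
        (∀ η₁, η₁ < ξ → ∀ η₂, η₂ < ξ → f η₁ = f η₂ → η₁ = η₂) := by
      intro ξ hξΛ
      have hcard : #(↥(Set.Iio ξ)) ≤ #(↥(Set.Iio θ.ord)) := by
        rw [Ordinal.mk_Iio_ordinal, Ordinal.mk_Iio_ordinal, Cardinal.lift_le, card_ord]
        have : ξ.card < Order.succ θ := by
          rw [hΛdef] at hξΛ; exact Cardinal.lt_ord.1 hξΛ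
        exact Order.lt_succ_iff.1 this
      obtain ⟨e⟩ := Cardinal.le_def _ _ |>.1 hcard
      refine ⟨fun η => if h : η < ξ then (e ⟨η, h⟩).1 else 0, ?_, ?_⟩
      · intro η hη; simp only [dif_pos hη]; exact (e ⟨η, hη⟩).2
      · intro η₁ h₁ η₂ h₂ hEq
        simp only [dif_pos h₁, dif_pos h₂] at hEq
        have := e.injective (Subtype.ext hEq)
        exact congrArg Subtype.val this
    choose ef hef1 hef2 using hembN
    -- the coding map
    set T := (↥(Set.Iio Λ) × (↥(Set.Iio θ.ord) → ↥(Set.Iio θ.ord))) with hT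
    have hθpos : (0 : Ordinal) < θ.ord := by
      refine Cardinal.lt_ord.2 ?_
      simpa using aleph0_pos.trans_le hθ
    set Φ : ↥S → T := fun x =>
      ⟨⟨ξof x.1, (hξ x.1 x.2).1⟩, fun ζ =>
        if h : ∃ η, η < ξof x.1 ∧ ef (ξof x.1) (hξ x.1 x.2).1 η = ζ.1 then
          ⟨col (br x.1 h.choose) x.1,
            (colP _ _ (hfacts x.1 x.2 h.choose h.choose_spec.1).1 x.2
              (hfacts x.1 x.2 h.choose h.choose_spec.1).2).1⟩
        else ⟨0, hθpos⟩⟩ with hΦ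
    have hΦval : ∀ (x : ↥S) (η : Ordinal) (hη : η < ξof x.1) (ζ : ↥(Set.Iio θ.ord))
        (hζ : ef (ξof x.1) (hξ x.1 x.2).1 η = ζ.1),
        ((Φ x).2 ζ).1 = col (br x.1 η) x.1 := by
      intro x η hη ζ hζ
      have hex : ∃ η', η' < ξof x.1 ∧ ef (ξof x.1) (hξ x.1 x.2).1 η' = ζ.1 := ⟨η, hη, hζ⟩
      simp only [hΦ, dif_pos hex]
      have hch := hex.choose_spec
      have : hex.choose = η :=
        hef2 (ξof x.1) (hξ x.1 x.2).1 _ hch.1 _ hη (by rw [hch.2, hζ])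
      rw [this]
    have hΦinj : Function.Injective Φ := by
      intro x y hxy
      have hfst : ξof x.1 = ξof y.1 := congrArg (fun p : T => p.1.1) hxy
      have htr : ∀ η, η < ξof x.1 → col (br x.1 η) x.1 = col (br y.1 η) y.1 := by
        intro η hη
        set ζ : ↥(Set.Iio θ.ord) :=
          ⟨ef (ξof x.1) (hξ x.1 x.2).1 η, hef1 _ _ η hη⟩ with hζdef
        have h1 : ((Φ x).2 ζ).1 = col (br x.1 η) x.1 := hΦval x η hη ζ rfl
        have h2 : ((Φ y).2 ζ).1 = col (br y.1 η) y.1 := by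
          refine hΦval y η (hfst ▸ hη) ζ ?_
          show ef (ξof y.1) _ η = ef (ξof x.1) (hξ x.1 x.2).1 η
          congr 1
          · exact hfst.symm
        rw [← h1, ← h2, hxy]
      -- branches coincide
      have hbreq : ∀ η, η ≤ ξof x.1 → br x.1 η = br y.1 η := by
        intro η hη
        induction η using Ordinal.induction with
        | h η IH =>
          have hsets : G (x.1) η = G (y.1) η := by
            ext z
            constructor
            · rintro ⟨hz, hz2⟩
              refine ⟨hz, fun η' hη' => ?_⟩
              have h' := hz2 η' hη'
              have e1 : br (x.1) η' = br (y.1) η' :=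
                IH η' hη' (le_of_lt (lt_of_lt_of_le hη' hη))
              have htr' : col (br (x.1) η') x.1 = col (br (x.1) η') y.1 := by
                have h2 := htr η' (lt_of_lt_of_le hη' hη)
                rwa [← e1] at h2
              refine ⟨e1 ▸ h'.1, ?_⟩
              rw [← e1, ← htr']
              exact h'.2
            · rintro ⟨hz, hz2⟩
              refine ⟨hz, fun η' hη' => ?_⟩
              have h' := hz2 η' hη'
              have e1 : br (x.1) η' = br (y.1) η' :=
                IH η' hη' (le_of_lt (lt_of_lt_of_le hη' hη))
              have htr' : col (br (x.1) η') x.1 = col (br (x.1) η') y.1 := by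
                have h2 := htr η' (lt_of_lt_of_le hη' hη)
                rwa [← e1] at h2
              rw [← e1, ← htr'] at h'
              exact h'
          rw [brEq, brEq, hsets]
      have : x.1 = y.1 := by
        rw [← (hξ x.1 x.2).2, ← (hξ y.1 y.2).2, ← hfst]
        exact hbreq (ξof x.1) le_rfl
      exact Subtype.ext this
    -- counting
    have hcount : #(↥S) ≤ Cardinal.lift.{u+1} (2 ^ θ) := by
      calc #(↥S) ≤ #T := Cardinal.mk_le_of_injective hΦinj
        _ = #(↥(Set.Iio Λ)) * #(↥(Set.Iio θ.ord) → ↥(Set.Iio θ.ord)) := by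
              rw [hT, Cardinal.mk_prod, Cardinal.lift_id, Cardinal.lift_id]
        _ ≤ Cardinal.lift.{u+1} (2 ^ θ) * Cardinal.lift.{u+1} (2 ^ θ) := by
              gcongr
              · rw [Ordinal.mk_Iio_ordinal, hΛcard, Cardinal.lift_le]
                exact Order.succ_le_of_lt (Cardinal.cantor θ)
              · rw [← Cardinal.power_def, Ordinal.mk_Iio_ordinal, card_ord,
                  ← Cardinal.lift_power, Cardinal.lift_le, Cardinal.power_self_eq hθ]
        _ = Cardinal.lift.{u+1} (2 ^ θ) := Cardinal.mul_eq_self (by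
              rw [← Cardinal.lift_aleph0.{u+1, u}, Cardinal.lift_le]
              exact hθ.trans (Cardinal.cantor θ).le |>.trans le_rfl)
    have : Cardinal.lift.{u+1} (Order.succ (2 ^ θ)) ≤ Cardinal.lift.{u+1} (2 ^ θ) :=
      hS.trans hcount
    rw [Cardinal.lift_le] at this
    exact absurd ((Order.succ_le_iff).1 this) (lt_irrefl _)
  · -- a long branch exists
    push_neg at hall
    obtain ⟨x, hx, hne⟩ := hall
    have hmemG : ∀ ξ, ξ < Λ → x ∈ G x ξ := fun ξ hξ =>
      L1 x hx ξ fun η hη => hne η (hη.trans hξ)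
    have hbrG : ∀ ξ, ξ < Λ → br x ξ ∈ G x ξ := fun ξ hξ => by
      rw [brEq]; exact csInf_mem ⟨x, hmemG ξ hξ⟩
    have hbrS : ∀ ξ, ξ < Λ → br x ξ ∈ S := fun ξ hξ => (hbrG ξ hξ).1
    have hbrlt : ∀ ξ, ξ < Λ → br x ξ < x := by
      intro ξ hξ
      have hle : br x ξ ≤ x := by rw [brEq]; exact csInf_le' (hmemG ξ hξ)
      exact lt_of_le_of_ne hle (hne ξ hξ)
    have hinc : ∀ η ξ, η < ξ → ξ < Λ → br x η < br x ξ := fun η ξ hηξ hξ =>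
      ((hbrG ξ hξ).2 η hηξ).1
    have hcoleq : ∀ η ξ, η < ξ → ξ < Λ → col (br x η) (br x ξ) = col (br x η) x :=
      fun η ξ hηξ hξ => ((hbrG ξ hξ).2 η hηξ).2
    have hd : ∀ ξ, ξ < Λ → col (br x ξ) x < θ.ord :=
      fun ξ hξ => (colP _ _ (hbrS ξ hξ) hx (hbrlt ξ hξ)).1
    -- find an infinite fiber
    have hfib : ∃ ε', ({ξ | ξ < Λ ∧ col (br x ξ) x = ε'}).Infinite := by
      by_contra hfin
      push_neg at hfin
      set D : ↥(Set.Iio Λ) → ↥(Set.Iio θ.ord) := fun ξ =>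
        ⟨col (br x ξ.1) x, hd ξ.1 ξ.2⟩ with hD
      have hpre : ∀ b : ↥(Set.Iio θ.ord), #(D ⁻¹' {b}) ≤ ℵ₀ := by
        intro b
        have hsub : (D ⁻¹' {b}) ⊆ Subtype.val ⁻¹' {ξ | ξ < Λ ∧ col (br x ξ) x = b.1} := by
          intro ξ hξ
          simp only [Set.mem_preimage, Set.mem_singleton_iff] at hξ
          exact ⟨ξ.2, congrArg Subtype.val hξ⟩
        have hfin2 : ((Subtype.val (p := fun o => o ∈ Set.Iio Λ)) ⁻¹'
            {ξ | ξ < Λ ∧ col (br x ξ) x = b.1}).Finite :=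
          (hfin b.1).preimage (Subtype.val_injective.injOn)
        exact (Cardinal.lt_aleph0_iff_set_finite.2 (hfin2.subset hsub)).le
      have hbig := Cardinal.mk_le_mk_mul_of_mk_preimage_le D hpre
      rw [Ordinal.mk_Iio_ordinal, Ordinal.mk_Iio_ordinal, hΛcard, card_ord] at hbig
      have hmul : Cardinal.lift.{u+1} θ * ℵ₀ = Cardinal.lift.{u+1} θ := by
        have hθ' : ℵ₀ ≤ Cardinal.lift.{u+1} θ := by
          rw [← Cardinal.lift_aleph0.{u+1, u}, Cardinal.lift_le]; exact hθ
        rw [Cardinal.mul_eq_max hθ' le_rfl, max_eq_left]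
        exact le_trans le_rfl hθ'
      rw [hmul, Cardinal.lift_le] at hbig
      exact absurd hbig (Order.lt_succ θ).not_ge
    obtain ⟨ε', hinf⟩ := hfib
    set Hs : Set Ordinal.{u} := {ξ | ξ < Λ ∧ col (br x ξ) x = ε'} with hHs
    set g : ℕ → Ordinal.{u} :=
      fun n => Nat.rec (sInf Hs) (fun _ prev => sInf (Hs ∩ Set.Ioi prev)) n with hg
    have inv : ∀ n, g n ∈ Hs ∧ (Hs ∩ Set.Ioi (g n)).Infinite := by
      intro n
      induction n with
      | zero =>
        have hmem : g 0 ∈ Hs := csInf_mem hinf.nonempty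
        refine ⟨hmem, ?_⟩
        have hsub : Hs \ {g 0} ⊆ Hs ∩ Set.Ioi (g 0) := by
          rintro y ⟨hy, hy2⟩
          exact ⟨hy, lt_of_le_of_ne (csInf_le' hy) (Ne.symm hy2)⟩
        exact (hinf.diff (Set.finite_singleton _)).mono hsub
      | succ n IH =>
        have hne : (Hs ∩ Set.Ioi (g n)).Nonempty := IH.2.nonempty
        have hmem : g (n+1) ∈ Hs ∩ Set.Ioi (g n) := csInf_mem hne
        refine ⟨hmem.1, ?_⟩
        have hsub : (Hs ∩ Set.Ioi (g n)) \ {g (n+1)} ⊆ Hs ∩ Set.Ioi (g (n+1)) := by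
          rintro y ⟨⟨hy1, hy3⟩, hy2⟩
          exact ⟨hy1, lt_of_le_of_ne (csInf_le' (s := Hs ∩ Set.Ioi (g n)) ⟨hy1, hy3⟩) (Ne.symm hy2)⟩
        exact (IH.2.diff (Set.finite_singleton _)).mono hsub
    have hgmono : ∀ n, g n < g (n+1) := by
      intro n
      have h := csInf_mem (inv n).2.nonempty
      exact h.2
    have hdesc : ∀ n, F (br x (g (n+1))) ε' < F (br x (g n)) ε' := by
      intro n
      have h1 : g n ∈ Hs := (inv n).1
      have h2 : g (n+1) ∈ Hs := (inv (n+1)).1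
      have hlt : g n < g (n+1) := hgmono n
      have hceq : col (br x (g n)) (br x (g (n+1))) = ε' := by
        rw [hcoleq _ _ hlt h2.1]; exact h1.2
      have := (colP (br x (g n)) (br x (g (n+1))) (hbrS _ h1.1) (hbrS _ h2.1)
        (hinc _ _ hlt h2.1)).2
      rwa [hceq] at this
    obtain ⟨m, hm, hmin⟩ := Ordinal.lt_wf.has_min (Set.range fun n => F (br x (g n)) ε')
      (Set.range_nonempty _)
    obtain ⟨n, rfl⟩ := hm
    exact hmin _ ⟨n+1, rfl⟩ (hdesc n)


/-- Theorem 3.11: `s_μ` is `(μ,θ⁺)`-positively entangled iff `θ < cf μ` and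
`(cf μ)^θ < μ`. -/
theorem sMu_posEntangled_iff (μ : Cardinal.{u}) (hμ : ℵ₀ ≤ μ)
    (hsing : μ.ord.cof < μ)
    (ms : Ordinal.{u} → Cardinal.{u})
    (hmono : ∀ a b : Ordinal.{u}, a < b → b < (μ.ord.cof).ord → ms a < ms b)
    (hlt : ∀ a, a < (μ.ord.cof).ord → ms a < μ)
    (hcofin : ∀ c, c < μ → ∃ a, a < (μ.ord.cof).ord ∧ c < ms a)
    (θ : Cardinal.{u}) (hθ : ℵ₀ ≤ θ) :
    IsPosEntangled (SMu (μ.ord.cof) ms) μ (Order.succ θ) ↔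
      θ < μ.ord.cof ∧ (μ.ord.cof) ^ θ < μ := by
  classical
  set κ : Cardinal.{u} := μ.ord.cof with hκdef
  set K : Ordinal.{u} := κ.ord with hKdef
  have hμlim : Order.IsSuccLimit μ.ord := Cardinal.isSuccLimit_ord hμ
  have hκreg : κ.IsRegular := Cardinal.isRegular_cof hμlim
  have hκℵ : ℵ₀ ≤ κ := hκreg.aleph0_le
  have hκcof : K.cof = κ := hκreg.cof_eq
  have hκμ : κ < μ := hsing
  have hμpos : (0 : Ordinal) < μ.ord := by
    refine Cardinal.lt_ord.2 ?_
    simpa using aleph0_pos.trans_le hμ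
  have haddK : ∀ a b : Ordinal.{u}, a < K → b < K → a + b < K := by
    intro a b ha hb
    rw [hKdef, Cardinal.lt_ord] at ha hb ⊢
    rw [Ordinal.card_add]
    exact Cardinal.add_lt_of_lt hκℵ ha hb
  have honeK : (1 : Ordinal) < K := by
    rw [hKdef, Cardinal.lt_ord]
    simpa using one_lt_aleph0.trans_le hκℵ
  have hsuccK : ∀ a : Ordinal.{u}, a < K → a + 1 < K := fun a ha => haddK a 1 ha honeK
  have hms_le : ∀ a b : Ordinal.{u}, a ≤ b → b < K → ms a ≤ ms b := by
    intro a b hab hb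
    rcases lt_or_eq_of_le hab with h | h
    · exact (hmono a b h hb).le
    · rw [h]
  obtain ⟨γ₀, hγ₀K, hγ₀⟩ := hcofin κ hκμ
  have hmsγ₀ : ∀ b, b < K → γ₀ ≤ b → ℵ₀ ≤ ms b := fun b hb hgb =>
    hκℵ.trans (hγ₀.le.trans (hms_le _ _ hgb hb))
  -- the level function
  set A : Ordinal.{u} → Ordinal.{u} := fun i => sInf {α | i < (ms (γ₀ + α)).ord} with hAdef
  have hAne : ∀ i, i < μ.ord → {α | i < (ms (γ₀ + α)).ord}.Nonempty := by
    intro i hi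
    obtain ⟨a, haK, ha⟩ := hcofin i.card (Cardinal.lt_ord.1 hi)
    refine ⟨a, ?_⟩
    rw [Set.mem_setOf_eq, Cardinal.lt_ord]
    exact ha.trans_le (hms_le a (γ₀ + a) le_add_self (haddK _ _ hγ₀K haK))
  have hA1 : ∀ i, i < μ.ord → i < (ms (γ₀ + A i)).ord := fun i hi => csInf_mem (hAne i hi)
  have hA2 : ∀ i, i < μ.ord → A i < K := by
    intro i hi
    obtain ⟨a, haK, ha⟩ := hcofin i.card (Cardinal.lt_ord.1 hi)
    have hmem : a ∈ {α | i < (ms (γ₀ + α)).ord} := by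
      rw [Set.mem_setOf_eq, Cardinal.lt_ord]
      exact ha.trans_le (hms_le a (γ₀ + a) le_add_self (haddK _ _ hγ₀K haK))
    exact (csInf_le' hmem).trans_lt haK
  have hAmono : ∀ i j, i ≤ j → j < μ.ord → A i ≤ A j := by
    intro i j hij hj
    refine csInf_le_csInf (OrderBot.bddBelow _) (hAne j hj) ?_
    intro α hα
    exact lt_of_le_of_lt hij hα
  have hγA : ∀ i, i < μ.ord → γ₀ + A i < K := fun i hi => haddK _ _ hγ₀K (hA2 i hi)
  have hms0 : (0 : Ordinal) < (ms γ₀).ord := by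
    refine Cardinal.lt_ord.2 ?_
    simpa using (aleph0_pos.trans_le hκℵ).trans hγ₀
  set dflt : SMu κ ms := smk κ ms γ₀ 0 hγ₀K hms0 with hdflt
  constructor
  · intro hent
    have hθκ : θ < κ := by
      by_contra hle
      push_neg at hle
      -- Case A counterexample: σ₁ = κ, u = Iio K
      set t : Ordinal.{u} → Ordinal.{u} → SMu κ ms := fun ε i =>
        if h : ε < K ∧ i < μ.ord then
          smk κ ms (γ₀ + max ε (A i)) i
            (haddK _ _ hγ₀K (max_lt h.1 (hA2 i h.2)))
            ((hA1 i h.2).trans_le (Cardinal.ord_le_ord.2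
              (hms_le _ _ (add_le_add_right (le_max_right ε (A i)) γ₀)
                (haddK _ _ hγ₀K (max_lt h.1 (hA2 i h.2))))))
        else dflt with ht
      have htval : ∀ ε i (h1 : ε < K) (h2 : i < μ.ord),
          colOf (t ε i) = γ₀ + max ε (A i) ∧ rowOf (t ε i) = i := by
        intro ε i h1 h2
        simp only [ht, dif_pos (⟨h1, h2⟩ : ε < K ∧ i < μ.ord)]
        exact ⟨rfl, rfl⟩
      have hinj : ∀ ε, ε < κ.ord → ∀ i, i < μ.ord → ∀ j, j < μ.ord → i ≠ j →
          t ε i ≠ t ε j := by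
        intro ε hε i hi j hj hij hEq
        have h1 := (htval ε i hε hi).2
        have h2 := (htval ε j hε hj).2
        rw [← h1, ← h2, hEq] at hij
        exact hij rfl
      obtain ⟨a, ha, b, hb, hab, hiff⟩ :=
        hent κ (Order.lt_succ_iff.2 hle) t hinj (Set.Iio κ.ord) (Or.inr rfl)
      set ε : Ordinal.{u} := max (A a) (A b) + 1 with hεdef
      have hεK : ε < K := hsuccK _ (max_lt (hA2 a ha) (hA2 b hb))
      have hlt2 : t ε a < t ε b := (hiff ε hεK).2 hεK
      have hmaxa : max ε (A a) = ε :=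
        max_eq_left (((le_max_left (A a) (A b)).trans_lt (lt_add_one _)).le)
      have hmaxb : max ε (A b) = ε :=
        max_eq_left (((le_max_right (A a) (A b)).trans_lt (lt_add_one _)).le)
      rw [smu_lt_iff] at hlt2
      rcases hlt2 with h | ⟨_, h⟩
      · rw [(htval ε a hεK ha).1, (htval ε b hεK hb).1, hmaxa, hmaxb] at h
        exact lt_irrefl _ h
      · rw [(htval ε a hεK ha).2, (htval ε b hεK hb).2] at h
        exact absurd hab (asymm h)
    refine ⟨hθκ, ?_⟩
    by_contra hle'
    push_neg at hle'
    -- Case B counterexample: σ₁ = θ, u = ∅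
    have hθord : (0 : Ordinal) < θ.ord := by
      refine Cardinal.lt_ord.2 ?_
      simpa using aleph0_pos.trans_le hθ
    have hθadd : ∀ a b : Ordinal.{u}, a < θ.ord → b < θ.ord → a + b < θ.ord := by
      intro a b hA hb
      rw [Cardinal.lt_ord] at hA hb ⊢
      rw [Ordinal.card_add]
      exact Cardinal.add_lt_of_lt hθ hA hb
    have h2θ : (2 : Ordinal) < θ.ord := by
      rw [Cardinal.lt_ord]
      have : ((2 : Ordinal)).card = 2 := by simp
      rw [this]
      exact (Cardinal.nat_lt_aleph0 2).trans_le hθ |>.trans_le le_rfl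
    have h1θ : (1 : Ordinal) < θ.ord := by
      rw [Cardinal.lt_ord]
      have : ((1 : Ordinal)).card = 1 := by simp
      rw [this]
      exact one_lt_aleph0.trans_le hθ
    have hmulθ : ∀ q : Ordinal.{u}, q < θ.ord → 2 * q < θ.ord := by
      intro q hq
      rw [Cardinal.lt_ord] at hq ⊢
      rw [Ordinal.card_mul]
      refine Cardinal.mul_lt_of_lt hθ ?_ hq
      have : ((2 : Ordinal)).card = 2 := by simp
      rw [this]
      exact (Cardinal.nat_lt_aleph0 2).trans_le hθ
    -- coding embedding
    have hcard : #(↥(Set.Iio μ.ord)) ≤ #(↥(Set.Iio θ.ord) → ↥(Set.Iio K)) := by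
      have h1 : #(↥(Set.Iio θ.ord) → ↥(Set.Iio K)) = Cardinal.lift.{u+1} (κ ^ θ) := by
        rw [← Cardinal.power_def, Ordinal.mk_Iio_ordinal, Ordinal.mk_Iio_ordinal,
          card_ord, card_ord, ← Cardinal.lift_power]
      rw [h1, Ordinal.mk_Iio_ordinal, card_ord, Cardinal.lift_le]
      exact hle'
    obtain ⟨e⟩ := (Cardinal.le_def _ _).1 hcard
    set f : Ordinal.{u} → Ordinal.{u} → Ordinal.{u} := fun i q =>
      if h : i < μ.ord ∧ q < θ.ord then (e ⟨i, h.1⟩ ⟨q, h.2⟩).1 else 0 with hfdef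
    have hfK : ∀ i q, i < μ.ord → q < θ.ord → f i q < K := by
      intro i q hi hq
      simp only [hfdef, dif_pos (⟨hi, hq⟩ : i < μ.ord ∧ q < θ.ord)]
      exact (e ⟨i, hi⟩ ⟨q, hq⟩).2
    -- packing is strictly monotone
    have pack_lt : ∀ M v1 v2 i j : Ordinal.{u}, i < M → v1 < v2 →
        M * v1 + i < M * v2 + j := by
      intro M v1 v2 i j hi hv
      calc M * v1 + i < M * v1 + M := add_lt_add_right hi _
        _ = M * (v1 + 1) := by rw [Ordinal.add_one_eq_succ, Ordinal.mul_succ]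
        _ ≤ M * v2 := mul_le_mul_right (by
              rw [Ordinal.add_one_eq_succ]; exact Order.succ_le_of_lt hv) M
        _ ≤ M * v2 + j := le_self_add
    have hdivle : ∀ ε : Ordinal.{u}, ε / 2 ≤ ε := by
      intro ε
      refine (Ordinal.div_le two_ne_zero).2 ?_
      calc ε < Order.succ ε := Order.lt_succ ε
        _ = 1 * Order.succ ε := (one_mul _).symm
        _ ≤ 2 * Order.succ ε := mul_le_mul_left one_le_two _
    -- row capacity in collection mode
    have rowbound : ∀ i v : Ordinal.{u}, i < μ.ord → v < K →
        (ms (γ₀ + A i)).ord * v + i < (ms ((γ₀ + A i) + 1)).ord := by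
      intro i v hi hv
      have hcolK : (γ₀ + A i) + 1 < K := hsuccK _ (hγA i hi)
      have hm : ℵ₀ ≤ ms (γ₀ + A i) := hmsγ₀ _ (hγA i hi) le_self_add
      have hmN : ms (γ₀ + A i) < ms ((γ₀ + A i) + 1) := hmono _ _ (lt_add_one _) hcolK
      have hN : ℵ₀ ≤ ms ((γ₀ + A i) + 1) := hm.trans hmN.le
      rw [Cardinal.lt_ord, Ordinal.card_add, Ordinal.card_mul, card_ord]
      refine Cardinal.add_lt_of_lt hN (Cardinal.mul_lt_of_lt hN hmN ?_) ?_
      · -- v.card < ms ((γ₀+A i)+1)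
        have : v.card < κ := Cardinal.lt_ord.1 hv
        refine this.trans_le ?_
        exact hγ₀.le.trans ((hms_le γ₀ _ le_self_add (hγA i hi)).trans hmN.le)
      · exact (Cardinal.lt_ord.1 (hA1 i hi)).trans hmN
    -- the counterexample family
    set t : Ordinal.{u} → Ordinal.{u} → SMu κ ms := fun ε i =>
      if h : ε < θ.ord ∧ i < μ.ord then
        if hpar : ε % 2 = 1 then
          smk κ ms ((γ₀ + A i) + 1 + f i (ε / 2)) i
            (haddK _ _ (hsuccK _ (hγA i h.2))
              (hfK i (ε / 2) h.2 ((hdivle ε).trans_lt h.1)))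
            ((hA1 i h.2).trans_le (Cardinal.ord_le_ord.2 (hms_le _ _
              (le_self_add.trans le_self_add)
              (haddK _ _ (hsuccK _ (hγA i h.2))
                (hfK i (ε / 2) h.2 ((hdivle ε).trans_lt h.1))))))
        else
          smk κ ms ((γ₀ + A i) + 1) ((ms (γ₀ + A i)).ord * (f i (ε / 2)) + i)
            (hsuccK _ (hγA i h.2))
            (rowbound i (f i (ε / 2)) h.2 (hfK i (ε / 2) h.2 ((hdivle ε).trans_lt h.1)))
      else dflt with ht
    have htodd : ∀ ε i, ε < θ.ord → i < μ.ord → ε % 2 = 1 →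
        colOf (t ε i) = (γ₀ + A i) + 1 + f i (ε / 2) ∧ rowOf (t ε i) = i := by
      intro ε i h1 h2 hp
      simp only [ht, dif_pos (⟨h1, h2⟩ : ε < θ.ord ∧ i < μ.ord), dif_pos hp]
      exact ⟨rfl, rfl⟩
    have hteven : ∀ ε i, ε < θ.ord → i < μ.ord → ¬ (ε % 2 = 1) →
        colOf (t ε i) = (γ₀ + A i) + 1 ∧
        rowOf (t ε i) = (ms (γ₀ + A i)).ord * (f i (ε / 2)) + i := by
      intro ε i h1 h2 hp
      simp only [ht, dif_pos (⟨h1, h2⟩ : ε < θ.ord ∧ i < μ.ord), dif_neg hp]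
      exact ⟨rfl, rfl⟩
    have hsucc_inj : ∀ x y : Ordinal.{u}, x + 1 = y + 1 → x = y := by
      intro x y h
      rw [Ordinal.add_one_eq_succ, Ordinal.add_one_eq_succ] at h
      exact Order.succ_eq_succ_iff.1 h
    have hinj : ∀ ε, ε < θ.ord → ∀ i, i < μ.ord → ∀ j, j < μ.ord → i ≠ j →
        t ε i ≠ t ε j := by
      intro ε hε i hi j hj hij hEq
      by_cases hp : ε % 2 = 1
      · have h1 := (htodd ε i hε hi hp).2
        have h2 := (htodd ε j hε hj hp).2
        rw [← h1, ← h2, hEq] at hij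
        exact hij rfl
      · have hcoleq : colOf (t ε i) = colOf (t ε j) := by rw [hEq]
        rw [(hteven ε i hε hi hp).1, (hteven ε j hε hj hp).1] at hcoleq
        have hAeq : A i = A j :=
          (add_right_inj γ₀).1 (hsucc_inj _ _ hcoleq)
        have hroweq : rowOf (t ε i) = rowOf (t ε j) := by rw [hEq]
        rw [(hteven ε i hε hi hp).2, (hteven ε j hε hj hp).2, hAeq] at hroweq
        set M : Ordinal.{u} := (ms (γ₀ + A j)).ord with hM
        have hiM : i < M := by rw [hM, ← hAeq]; exact hA1 i hi
        have hjM : j < M := hA1 j hj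
        rcases lt_trichotomy (f i (ε / 2)) (f j (ε / 2)) with hv | hv | hv
        · exact absurd hroweq (pack_lt M _ _ i j hiM hv).ne
        · rw [hv] at hroweq
          exact hij ((add_right_inj _).1 hroweq)
        · exact absurd hroweq.symm (pack_lt M _ _ j i hjM hv).ne
    obtain ⟨a, ha, b, hb, hab, hiff⟩ :=
      hent θ (Order.lt_succ θ) t hinj ∅ (Or.inl rfl)
    have hnotlt : ∀ ε, ε < θ.ord → ¬ (t ε a < t ε b) := by
      intro ε hε h
      exact Set.notMem_empty _ ((hiff ε hε).1 h)
    have hAab : A a ≤ A b := hAmono a b hab.le hb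
    rcases lt_or_eq_of_le hAab with hlt2 | heq
    · refine hnotlt 0 hθord ?_
      have hp : ¬ ((0 : Ordinal) % 2 = 1) := by
        rw [Ordinal.zero_mod]
        exact zero_ne_one
      rw [smu_lt_iff]
      left
      rw [(hteven 0 a hθord ha hp).1, (hteven 0 b hθord hb hp).1,
        Ordinal.add_one_eq_succ, Ordinal.add_one_eq_succ]
      exact Order.succ_lt_succ ((add_lt_add_iff_left γ₀).2 hlt2)
    · have hfdiff : ∃ q, q < θ.ord ∧ f a q ≠ f b q := by
        by_contra hc
        push_neg at hc
        refine absurd ?_ hab.ne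
        have hee : e ⟨a, ha⟩ = e ⟨b, hb⟩ := by
          funext q
          refine Subtype.ext ?_
          have h1 := hc q.1 q.2
          simp only [hfdef, dif_pos (⟨ha, q.2⟩ : a < μ.ord ∧ q.1 < θ.ord),
            dif_pos (⟨hb, q.2⟩ : b < μ.ord ∧ q.1 < θ.ord)] at h1
          exact h1
        exact congrArg Subtype.val (e.injective hee)
      obtain ⟨q, hqθ, hfq⟩ := hfdiff
      rcases lt_or_gt_of_ne hfq with hfl | hfg
      · -- column mode at ε = 2q+1
        set ε : Ordinal.{u} := 2 * q + 1 with hεdef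
        have hεθ : ε < θ.ord := hθadd _ _ (hmulθ q hqθ) h1θ
        have hp : ε % 2 = 1 := by
          rw [hεdef, Ordinal.mul_add_mod_self]
          exact Ordinal.mod_eq_of_lt one_lt_two
        have hdiv : ε / 2 = q := by
          rw [hεdef, Ordinal.mul_add_div q two_ne_zero 1,
            Ordinal.div_eq_zero_of_lt one_lt_two, add_zero]
        refine hnotlt ε hεθ ?_
        rw [smu_lt_iff]
        left
        rw [(htodd ε a hεθ ha hp).1, (htodd ε b hεθ hb hp).1, hdiv, heq]
        exact (add_lt_add_iff_left _).2 hfl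
      · -- row mode at ε = 2q
        set ε : Ordinal.{u} := 2 * q with hεdef
        have hεθ : ε < θ.ord := hmulθ q hqθ
        have hp : ¬ (ε % 2 = 1) := by
          rw [hεdef, ← add_zero (2 * q), Ordinal.mul_add_mod_self, Ordinal.zero_mod]
          exact zero_ne_one
        have hdiv : ε / 2 = q := by
          rw [hεdef]
          exact Ordinal.mul_div_cancel q two_ne_zero
        refine hnotlt ε hεθ ?_
        rw [smu_lt_iff]
        right
        constructor
        · rw [(hteven ε a hεθ ha hp).1, (hteven ε b hεθ hb hp).1, heq]
        · rw [(hteven ε a hεθ ha hp).2, (hteven ε b hεθ hb hp).2, hdiv, heq]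
          exact pack_lt _ _ _ b a (hA1 b hb) hfg
  · rintro ⟨hθκ, hpow⟩
    intro σ₁ hσ₁ t hinj u hu
    have hσθ : σ₁ ≤ θ := Order.lt_succ_iff.1 hσ₁
    have hσκ : σ₁ < κ := hσθ.trans_lt hθκ
    have hκ0 : κ ≠ 0 := (aleph0_pos.trans_le hκℵ).ne'
    rcases hu with rfl | rfl
    · -- u = ∅ : find a coordinatewise non-increasing pair
      set V : ↥(Set.Iio μ.ord) → (↥(Set.Iio σ₁.ord) → ↥(Set.Iio K)) := fun i ε =>
        ⟨colOf (t ε.1 i.1), colOf_lt _⟩ with hV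
      have hbig : ∃ v, Cardinal.lift.{u+1} (Order.succ (2 ^ θ)) ≤ #(V ⁻¹' {v}) := by
        by_contra hsmall
        push_neg at hsmall
        have hpre : ∀ v, #(V ⁻¹' {v}) ≤ Cardinal.lift.{u+1} (2 ^ θ) := by
          intro v
          have h := hsmall v
          rw [Cardinal.lift_succ] at h
          exact Order.lt_succ_iff.1 h
        have hb := Cardinal.mk_le_mk_mul_of_mk_preimage_le V hpre
        rw [Ordinal.mk_Iio_ordinal, card_ord] at hb
        have hcod : #(↥(Set.Iio σ₁.ord) → ↥(Set.Iio K)) = Cardinal.lift.{u+1} (κ ^ σ₁) := by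
          rw [← Cardinal.power_def, Ordinal.mk_Iio_ordinal, Ordinal.mk_Iio_ordinal,
            card_ord, card_ord, ← Cardinal.lift_power]
        rw [hcod, ← Cardinal.lift_mul, Cardinal.lift_le] at hb
        have h2κ : (2 : Cardinal) ≤ κ := by
          refine le_trans ?_ hκℵ
          exact_mod_cast (Cardinal.nat_lt_aleph0 2).le
        have hℵκθ : ℵ₀ ≤ κ ^ θ := by
          refine hκℵ.trans ?_
          conv_lhs => rw [← Cardinal.power_one κ]
          exact Cardinal.power_le_power_left hκ0 (one_le_aleph0.trans hθ)
        have hfin : κ ^ σ₁ * 2 ^ θ ≤ κ ^ θ := by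
          calc κ ^ σ₁ * 2 ^ θ ≤ κ ^ θ * κ ^ θ :=
              mul_le_mul' (Cardinal.power_le_power_left hκ0 hσθ)
                (Cardinal.power_le_power_right h2κ)
            _ = κ ^ θ := Cardinal.mul_eq_self hℵκθ
        exact absurd (hb.trans hfin) hpow.not_ge
      obtain ⟨v, hv⟩ := hbig
      set S : Set Ordinal.{u} := Subtype.val '' (V ⁻¹' {v}) with hS
      have hSmk : Cardinal.lift.{u+1} (Order.succ (2 ^ θ)) ≤ #S := by
        rw [hS, Cardinal.mk_image_eq Subtype.val_injective]
        exact hv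
      obtain ⟨i, hiS, j, hjS, hij, hmon⟩ :=
        exists_monotone_pair θ hθ S hSmk (fun i ε => rowOf (t ε i))
      obtain ⟨i', hi'mem, hi'⟩ := hiS
      obtain ⟨j', hj'mem, hj'⟩ := hjS
      refine ⟨i, by rw [← hi']; exact i'.2, j, by rw [← hj']; exact j'.2, hij, ?_⟩
      intro ε hε
      refine iff_of_false ?_ (Set.notMem_empty ε)
      intro hltt
      have hcoleq : colOf (t ε i) = colOf (t ε j) := by
        have h1 : V i' = v := hi'mem
        have h2 : V j' = v := hj'mem
        have h5 := (congrFun h1 ⟨ε, hε⟩).trans (congrFun h2 ⟨ε, hε⟩).symm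
        have h6 := congrArg Subtype.val h5
        simp only [hV] at h6
        rw [hi', hj'] at h6
        exact h6
      have hrowle : rowOf (t ε i) ≤ rowOf (t ε j) :=
        hmon ε (hε.trans_le (Cardinal.ord_le_ord.2 hσθ))
      rw [smu_lt_iff] at hltt
      rcases hltt with h | ⟨_, h⟩
      · exact absurd hcoleq h.ne
      · exact absurd hrowle h.not_ge
    · -- u = Iio σ₁.ord : find a coordinatewise increasing pair
      set δ : Ordinal.{u} := Ordinal.bsup σ₁.ord (fun ε _ => colOf (t ε 0) + 1) with hδ
      have hδK : δ < K := by
        refine Ordinal.bsup_lt_ord ?_ ?_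
        · rw [card_ord, hκcof]; exact hσκ
        · intro ε hε
          exact hsuccK _ (colOf_lt _)
      set Bad : Set Ordinal.{u} :=
        {i | i < μ.ord ∧ ∃ ε, ε < σ₁.ord ∧ colOf (t ε i) < δ} with hBad
      have hBadcard : #Bad < Cardinal.lift.{u+1} μ := by
        have hBadsub : Bad ⊆
            ⋃ (ε : ↥(Set.Iio σ₁.ord)), {i | i < μ.ord ∧ colOf (t ε.1 i) < δ} := by
          rintro i ⟨hi, ε, hε, hcol⟩
          exact Set.mem_iUnion.2 ⟨⟨ε, hε⟩, hi, hcol⟩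
        have hBε : ∀ ε : ↥(Set.Iio σ₁.ord), #({i | i < μ.ord ∧ colOf (t ε.1 i) < δ}) ≤
            Cardinal.lift.{u+1} (δ.card * ms δ) := by
          intro ε
          set emb : ↥({i | i < μ.ord ∧ colOf (t ε.1 i) < δ}) →
              (↥(Set.Iio δ) × ↥(Set.Iio (ms δ).ord)) := fun x =>
            (⟨colOf (t ε.1 x.1), x.2.2⟩,
             ⟨rowOf (t ε.1 x.1), (rowOf_lt _).trans_le
               (Cardinal.ord_le_ord.2 (hmono _ δ x.2.2 hδK).le)⟩) with hembd
          have hembinj : Function.Injective emb := by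
            intro x y hxy
            have hc : colOf (t ε.1 x.1) = colOf (t ε.1 y.1) :=
              congrArg (fun p => (Prod.fst p).1) hxy
            have hr : rowOf (t ε.1 x.1) = rowOf (t ε.1 y.1) :=
              congrArg (fun p => (Prod.snd p).1) hxy
            have hteq : t ε.1 x.1 = t ε.1 y.1 := smu_ext hc hr
            by_contra hne
            have hxyne : x.1 ≠ y.1 := fun h => hne (Subtype.ext h)
            exact hinj ε.1 ε.2 x.1 x.2.1 y.1 y.2.1 hxyne hteq
          calc #({i | i < μ.ord ∧ colOf (t ε.1 i) < δ})
              ≤ #(↥(Set.Iio δ) × ↥(Set.Iio (ms δ).ord)) :=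
                Cardinal.mk_le_of_injective hembinj
            _ = Cardinal.lift.{u+1} (δ.card * ms δ) := by
                rw [Cardinal.mk_prod, Cardinal.lift_id, Cardinal.lift_id,
                  Ordinal.mk_Iio_ordinal, Ordinal.mk_Iio_ordinal, card_ord,
                  ← Cardinal.lift_mul]
        calc #Bad ≤ #(⋃ (ε : ↥(Set.Iio σ₁.ord)), {i | i < μ.ord ∧ colOf (t ε.1 i) < δ}) :=
              Cardinal.mk_le_mk_of_subset hBadsub
          _ ≤ Cardinal.sum (fun ε : ↥(Set.Iio σ₁.ord) =>
                #({i | i < μ.ord ∧ colOf (t ε.1 i) < δ})) := Cardinal.mk_iUnion_le_sum_mk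
          _ ≤ Cardinal.sum (fun _ : ↥(Set.Iio σ₁.ord) =>
                Cardinal.lift.{u+1} (δ.card * ms δ)) := Cardinal.sum_le_sum _ _ hBε
          _ = #(↥(Set.Iio σ₁.ord)) * Cardinal.lift.{u+1} (δ.card * ms δ) :=
                Cardinal.sum_const' _ _
          _ = Cardinal.lift.{u+1} (σ₁ * (δ.card * ms δ)) := by
                rw [Ordinal.mk_Iio_ordinal, card_ord, ← Cardinal.lift_mul]
          _ < Cardinal.lift.{u+1} μ := by
                rw [Cardinal.lift_lt]
                refine Cardinal.mul_lt_of_lt hμ (hσκ.trans hκμ) ?_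
                refine Cardinal.mul_lt_of_lt hμ ?_ (hlt δ hδK)
                exact (Cardinal.lt_ord.1 hδK).trans hκμ
      have hbex : ∃ b, b < μ.ord ∧ b ∉ Bad ∧ b ≠ 0 := by
        by_contra hno
        push_neg at hno
        have hsub : Set.Iio μ.ord ⊆ Bad ∪ {0} := by
          intro i hi
          by_cases hiB : i ∈ Bad
          · exact Or.inl hiB
          · exact Or.inr (hno i hi hiB)
        have h1 : Cardinal.lift.{u+1} μ ≤ #(Bad ∪ {0} : Set Ordinal.{u}) := by
          have := Cardinal.mk_le_mk_of_subset hsub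
          rwa [Ordinal.mk_Iio_ordinal, card_ord] at this
        have h2 : #(Bad ∪ {0} : Set Ordinal.{u}) ≤ #Bad + 1 := by
          refine (Cardinal.mk_union_le _ _).trans ?_
          rw [Cardinal.mk_singleton]
        have hℵμ : ℵ₀ ≤ Cardinal.lift.{u+1} μ := by
          rw [← Cardinal.lift_aleph0.{u+1, u}, Cardinal.lift_le]; exact hμ
        have h3 : #Bad + 1 < Cardinal.lift.{u+1} μ :=
          Cardinal.add_lt_of_lt hℵμ hBadcard (one_lt_aleph0.trans_le hℵμ)
        exact absurd (h1.trans h2) h3.not_ge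
      obtain ⟨b, hbμ, hbB, hb0⟩ := hbex
      refine ⟨0, hμpos, b, hbμ, pos_iff_ne_zero.2 hb0, ?_⟩
      intro ε hε
      refine iff_of_true ?_ hε
      rw [smu_lt_iff]
      left
      have h1 : colOf (t ε 0) < δ := by
        have hle := Ordinal.le_bsup (fun ε (_ : ε < σ₁.ord) => colOf (t ε 0) + 1) ε hε
        exact (lt_add_one _).trans_le hle
      have h2 : δ ≤ colOf (t ε b) := by
        by_contra hcc
        push_neg at hcc
        exact hbB ⟨hbμ, ε, hε, hcc⟩
      exact h1.trans_le h2
end
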